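/- arXiv:1205.0961 — 5 statements merged into one kernel-verified Lean document; each statement's English description precedes it below -/
import Mathlib

section
/- Let 𝐚 be an infinite word over a finite alphabet such that the difference p(𝐚,n) − n is bounded as n ranges over the positive integers. Then the Diophantine exponent of 𝐚 satisfies dio(𝐚) > 2. -/
open Filter

noncomputable section

/-- The `j`-th digit (j ≥ 1) of the base-`b` expansion of the fractional part of `ξ`. -/
def digit (b : ℕ) (ξ : ℝ) (j : ℕ) : ℕ := (⌊Int.fract ξ * (b : ℝ) ^ j⌋ % (b : ℤ)).toNat

/-- The digit sequence `a₁ a₂ a₃ ⋯` of the base-`b` expansion of `ξ` (index `n` gives `a_{n+1}`). -/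
def digitSeq (b : ℕ) (ξ : ℝ) (n : ℕ) : ℕ := digit b ξ (n + 1)

/-- Subword complexity of an infinite word. -/
def wordComplexity {A : Type*} (a : ℕ → A) (n : ℕ) : ℕ :=
  Set.ncard {w : Fin n → A | ∃ j : ℕ, ∀ i : Fin n, w i = a (j + i)}

/-- Subword complexity `p(ξ, b, n)` of the base-`b` expansion of `ξ`. -/
def realComplexity (b : ℕ) (ξ : ℝ) (n : ℕ) : ℕ := wordComplexity (digitSeq b ξ) n

/-- Exponents `ρ` for which `|ξ - p/q| < q^(-ρ)` has infinitely many rational solutions. -/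
def muSet (ξ : ℝ) : Set ℝ :=
  {ρ : ℝ | {r : ℚ | |ξ - (r : ℝ)| < 1 / (r.den : ℝ) ^ ρ}.Infinite}

/-- The irrationality exponent of a real number. -/
def mu (ξ : ℝ) : EReal := sSup ((fun ρ : ℝ => (ρ : EReal)) '' muSet ξ)

/-- Fractional power `V^x` of a finite word. -/
def wordPow {A : Type*} (V : List A) (x : ℝ) : List A :=
  (List.replicate ⌊x⌋₊ V).flatten ++ V.take ⌈(x - (⌊x⌋₊ : ℝ)) * (V.length : ℝ)⌉₊

/-- The prefix of length `n` of an infinite word. -/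
def prefixWord {A : Type*} (a : ℕ → A) (n : ℕ) : List A := (List.range n).map a

/-- `L` is a prefix of the infinite word `a`. -/
def IsPrefixSeq {A : Type*} (a : ℕ → A) (L : List A) : Prop := L = prefixWord a L.length

/-- The set of exponents defining the Diophantine exponent of an infinite word. -/
def dioSet {A : Type*} (a : ℕ → A) : Set ℝ :=
  {ρ : ℝ | ∀ m : ℕ, ∃ (U V : List A) (w : ℝ), V ≠ [] ∧ 0 < w ∧
    m ≤ (U ++ wordPow V w).length ∧ IsPrefixSeq a (U ++ wordPow V w) ∧
    ρ ≤ ((U ++ wordPow V w).length : ℝ) / ((U ++ V).length : ℝ)}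

/-- The Diophantine exponent of an infinite word. -/
def dio {A : Type*} (a : ℕ → A) : EReal := sSup ((fun ρ : ℝ => (ρ : EReal)) '' dioSet a)

/-- The set of exponents defining the initial critical exponent of an infinite word. -/
def iceSet {A : Type*} (a : ℕ → A) : Set ℝ :=
  {ρ : ℝ | 0 < ρ ∧ ∀ m : ℕ, ∃ n : ℕ, m ≤ n ∧ 0 < n ∧
    IsPrefixSeq a (wordPow (prefixWord a n) ρ)}

/-- The initial critical exponent of an infinite word. -/
def ice {A : Type*} (a : ℕ → A) : EReal := sSup ((fun ρ : ℝ => (ρ : EReal)) '' iceSet a)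

/-- An infinite word is eventually periodic. -/
def EventuallyPeriodic {A : Type*} (a : ℕ → A) : Prop :=
  ∃ T : ℕ, 0 < T ∧ ∃ N : ℕ, ∀ n : ℕ, N ≤ n → a (n + T) = a n

/-- A Sturmian word: an infinite binary word of subword complexity `n + 1`. -/
def IsSturmian (s : ℕ → Fin 2) : Prop := ∀ n : ℕ, 1 ≤ n → wordComplexity s n = n + 1

/-- The slope of a binary word: the frequency of the letter `1`. -/
def HasSlope (s : ℕ → Fin 2) (α : ℝ) : Prop :=
  Tendsto (fun n : ℕ => (((prefixWord s n).count 1 : ℕ) : ℝ) / (n : ℝ)) atTop (nhds α)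

/-- The iterated Gauss map orbit: complete quotients of the continued fraction of `ξ`. -/
def cfTail (ξ : ℝ) : ℕ → ℝ
  | 0 => ξ
  | n + 1 => 1 / Int.fract (cfTail ξ n)

/-- The `n`-th partial quotient of the continued fraction expansion of `ξ`. -/
def partialQuotient (ξ : ℝ) (n : ℕ) : ℤ := ⌊cfTail ξ n⌋

/-!
An eventually periodic word has prefixes that are arbitrarily high powers. Otherwise suppose that,
beyond some length, no prefix `U V^w` has `|U V^w| / |U V| ≥ 201 / 100`. As `p(n) ≤ n + C`, two of
the factors of length `n` starting before `n + C + 1` coincide; this yields a run (a maximal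
repetition with its least period) whose first period ends by `n + C` and which reaches `n` letters
further, hence ends near `2n` by the ratio bound. Three scales, each beyond the reach of the
previous run, give three distinct such runs. By Fine–Wilf, two distinct runs overlap in less than
the sum of their periods, so one of them starts early; and two early runs with periods `q < q'`
make `q' - q` a period of a long segment starting near the origin, a repetition of ratio far
above `201 / 100`.
-/

namespace InfiniteWord

variable {A : Type*} {a : ℕ → A}

def HasPeriodOn (a : ℕ → A) (s e q : ℕ) : Prop :=
  ∀ x, s ≤ x → x + q < e → a x = a (x + q)

namespace HasPeriodOn

variable {s e q : ℕ}

theorem mono {s' e' : ℕ} (h : HasPeriodOn a s e q) (hs : s ≤ s') (he : e' ≤ e) :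
    HasPeriodOn a s' e' q :=
  fun x hx hxe => h x (hs.trans hx) (hxe.trans_le he)

theorem apply_eq_apply_add_mul (h : HasPeriodOn a s e q) {x : ℕ} (hx : s ≤ x) :
    ∀ k, x + q * k < e → a x = a (x + q * k)
  | 0, _ => rfl
  | k + 1, hk => by
    rw [mul_add_one] at hk
    rw [apply_eq_apply_add_mul h hx k (by omega), mul_add_one, ← add_assoc]
    exact h _ (by omega) (by omega)

theorem apply_eq_of_modEq (h : HasPeriodOn a s e q) {x y : ℕ} (hx : s ≤ x) (hy : s ≤ y)
    (hxe : x < e) (hye : y < e) (hxy : x ≡ y [MOD q]) : a x = a y := by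
  wlog hle : x ≤ y generalizing x y
  · exact (this hy hx hye hxe hxy.symm (by omega)).symm
  obtain ⟨k, hk⟩ := (Nat.modEq_iff_dvd' hle).1 hxy
  rw [show y = x + q * k by omega]
  exact h.apply_eq_apply_add_mul hx k (by omega)

theorem sub_of_le {p : ℕ} (hp : HasPeriodOn a s e p) (hq : HasPeriodOn a s e q) (hpq : p ≤ q)
    (hlen : s + p + q ≤ e) : HasPeriodOn a s e (q - p) := by
  intro x hx hxe
  by_cases hxq : x + q < e
  · rw [hq x hx hxq, hp (x + (q - p)) (by omega) (by omega), show x + (q - p) + p = x + q by omega]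
  · have h₁ := hp (x - p) (by omega) (by omega)
    have h₂ := hq (x - p) (by omega) (by omega)
    rw [show x - p + p = x by omega] at h₁
    rw [show x - p + q = x + (q - p) by omega] at h₂
    rw [← h₁, h₂]

/-- The Fine–Wilf theorem, with the length bound `p + q` instead of the sharp `p + q - gcd p q`. -/
theorem gcd {p : ℕ} (hp : HasPeriodOn a s e p) (hq : HasPeriodOn a s e q)
    (hlen : s + p + q ≤ e) : HasPeriodOn a s e (Nat.gcd p q) := by
  induction h : p + q using Nat.strong_induction_on generalizing p q with
  | _ n ih =>
    wlog hpq : p ≤ q generalizing p q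
    · rw [Nat.gcd_comm]
      exact this hq hp (by omega) (by omega) (by omega)
    rcases Nat.eq_zero_or_pos p with rfl | hp0
    · simpa using hq
    rw [← Nat.gcd_sub_self_right hpq]
    exact ih (p + (q - p)) (by omega) hp (hp.sub_of_le hq hpq hlen) (by omega) rfl

/-- Every position of the segment is congruent modulo `Q` to one in the window. -/
theorem of_window {Q g u v : ℕ} (hQ : 0 < Q) (h : HasPeriodOn a s e Q)
    (hwin : HasPeriodOn a u v g) (hsu : s ≤ u) (hve : v ≤ e) (hlen : u + Q + g ≤ v) :
    HasPeriodOn a s e g := by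
  intro x hx hxe
  set x' := u + (x + Q * u - u) % Q
  have hlt : (x + Q * u - u) % Q < Q := Nat.mod_lt _ hQ
  have hmod : x' ≡ x [MOD Q] := by
    have h₁ : x' ≡ u + (x + Q * u - u) [MOD Q] := (Nat.mod_modEq _ Q).add_left u
    have hu : u ≤ Q * u := Nat.le_mul_of_pos_left u hQ
    rw [show u + (x + Q * u - u) = x + Q * u by omega] at h₁
    exact h₁.trans (by simp [Nat.ModEq])
  rw [h.apply_eq_of_modEq hx (by omega) (by omega) (by omega) hmod.symm,
    h.apply_eq_of_modEq (y := x' + g) (by omega) (by omega) hxe (by omega) (hmod.add_right g).symm]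
  exact hwin x' (by omega) (by omega)

end HasPeriodOn

theorem flatten_replicate_map_range {f : ℕ → A} {q : ℕ} (hf : Function.Periodic f q) (K : ℕ) :
    (List.replicate K ((List.range q).map f)).flatten = (List.range (K * q)).map f := by
  induction K with
  | zero => simp
  | succ K ih =>
    rw [List.replicate_succ, List.flatten_cons, ih, Nat.succ_mul, add_comm, List.range_add,
      List.map_append, List.map_map]
    congr 2
    funext x
    simp only [Function.comp_apply, add_comm q x, hf x]

theorem wordPow_map_range {f : ℕ → A} {q : ℕ} (hq : 0 < q) (hf : Function.Periodic f q)
    (M : ℕ) : wordPow ((List.range q).map f) ((M : ℝ) / q) = (List.range M).map f := by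
  have hfloor : ⌊(M : ℝ) / q⌋₊ = M / q := by rw [Nat.floor_div_natCast, Nat.floor_natCast]
  have hceil : ⌈((M : ℝ) / q - (M / q : ℕ)) * q⌉₊ = M % q := by
    have hmod : ((M % q : ℕ) : ℝ) = M - (M / q : ℕ) * q := by
      rw [eq_sub_iff_add_eq]; exact_mod_cast Nat.mod_add_div' M q
    rw [sub_mul, div_mul_cancel₀ _ (by positivity), ← hmod, Nat.ceil_natCast]
  unfold wordPow
  rw [List.length_map, List.length_range, hfloor, hceil, flatten_replicate_map_range hf,
    ← List.map_take, List.take_range, min_eq_left (Nat.mod_lt _ hq).le]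
  conv_rhs => rw [← Nat.div_add_mod' M q, List.range_add, List.map_append, List.map_map]
  congr 2
  funext x
  simpa [add_comm] using ((hf.nat_mul (M / q)) x).symm

theorem mem_dioSet_of_hasPeriodOn {ρ : ℝ}
    (h : ∀ m, ∃ i q e, 0 < q ∧ i < e ∧ m ≤ e ∧ HasPeriodOn a i e q ∧ ρ * (i + q) ≤ e) :
    ρ ∈ dioSet a := by
  intro m
  obtain ⟨i, q, e, hq, hie, hme, hper, hρ⟩ := h m
  set f : ℕ → A := fun k => a (i + k % q)
  have hf : Function.Periodic f q := fun k => by simp [f]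
  set V := (List.range q).map f
  have hprefix : prefixWord a i ++ wordPow V ((e - i : ℕ) / q : ℝ) = prefixWord a e := by
    rw [wordPow_map_range hq hf]
    have hmap : (List.range (e - i)).map f = (List.range (e - i)).map (fun k => a (i + k)) :=
      List.map_congr_left fun k hk => by
        rw [List.mem_range] at hk
        have := Nat.mod_le k q
        exact hper.apply_eq_of_modEq (by omega) (by omega) (by omega)
          (by omega) ((Nat.mod_modEq k q).add_left i)
    rw [hmap, prefixWord, prefixWord, show e = i + (e - i) by omega, List.range_add,
      List.map_append, List.map_map, Nat.add_sub_cancel_left]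
    rfl
  have hlen : (prefixWord a i ++ V).length = i + q := by simp [V, prefixWord]
  refine ⟨prefixWord a i, V, (e - i : ℕ) / q, by simpa [V] using hq.ne',
    div_pos (by exact_mod_cast Nat.sub_pos_of_lt hie) (by exact_mod_cast hq), ?_, ?_, ?_⟩
  · rw [hprefix]; simpa [prefixWord] using hme
  · rw [hprefix, IsPrefixSeq]; simp [prefixWord]
  · rw [hprefix, hlen, le_div_iff₀ (by positivity)]
    simpa [prefixWord] using hρ

theorem mem_dioSet_of_eventuallyPeriodic (hp : EventuallyPeriodic a) (ρ : ℝ) : ρ ∈ dioSet a := by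
  obtain ⟨T, hT, N, hper⟩ := hp
  refine mem_dioSet_of_hasPeriodOn fun m => ⟨N, T, (⌈ρ⌉₊ + 1) * (N + T) + m, hT, by nlinarith,
    by nlinarith, fun x hx _ => (hper x hx).symm, ?_⟩
  push_cast
  nlinarith [Nat.le_ceil ρ]

/-- A prefix `a[0, e)` that is `q`-periodic from position `i` on is a factorization `U V^w` with
`|U V| = i + q`; here every such prefix of length at least `m` has `|U V^w| / |U V| < 201 / 100`. -/
def BoundedRepetitions (a : ℕ → A) (m : ℕ) : Prop :=
  ∀ i q e, 0 < q → m ≤ e → HasPeriodOn a i e q → 100 * e < 201 * (i + q)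

theorem mem_dioSet_of_forall_not_boundedRepetitions (h : ∀ m, ¬ BoundedRepetitions a m) :
    (201 / 100 : ℝ) ∈ dioSet a := by
  refine mem_dioSet_of_hasPeriodOn fun m => ?_
  obtain ⟨i, q, e, hq, hm, hper, hle⟩ : ∃ i q e, 0 < q ∧ m ≤ e ∧ HasPeriodOn a i e q ∧
      201 * (i + q) ≤ 100 * e := by
    simpa [BoundedRepetitions] using h m
  refine ⟨i, q, e, hq, by omega, hm, hper, ?_⟩
  have : (201 * (i + q) : ℝ) ≤ 100 * e := by exact_mod_cast hle
  linarith

@[ext]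
structure Run (a : ℕ → A) where
  start : ℕ
  finish : ℕ
  period : ℕ
  period_pos : 0 < period
  start_add_period_lt : start + period < finish
  hasPeriodOn : HasPeriodOn a start finish period
  minimal : ∀ p, 0 < p → p < period → ¬ HasPeriodOn a start finish p
  left_maximal : 0 < start → a (start - 1) ≠ a (start - 1 + period)
  right_maximal : a (finish - period) ≠ a finish

namespace Run

theorem le_finish_of_hasPeriodOn (R : Run a) {s e : ℕ} (h : HasPeriodOn a s e R.period)
    (hs : s ≤ R.finish - R.period) : e ≤ R.finish := by
  have hlt := R.start_add_period_lt
  by_contra he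
  have := h (R.finish - R.period) hs (by omega)
  exact R.right_maximal (by rwa [Nat.sub_add_cancel (by omega)] at this)

theorem start_le_of_hasPeriodOn (R : Run a) {s e : ℕ} (h : HasPeriodOn a s e R.period)
    (he : R.start + R.period ≤ e) : R.start ≤ s := by
  by_contra hs
  exact R.left_maximal (by omega) (h (R.start - 1) (by omega) (by omega))

theorem eq_of_period_eq {R R' : Run a} (hq : R.period = R'.period)
    (hov : max R.start R'.start + R.period ≤ min R.finish R'.finish) : R = R' := by
  have h' := R'.hasPeriodOn
  rw [← hq] at h'
  have hglue : HasPeriodOn a (min R.start R'.start) (max R.finish R'.finish) R.period := by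
    intro x hx hxe
    by_cases h : R.start ≤ x ∧ x + R.period < R.finish
    · exact R.hasPeriodOn x h.1 h.2
    · exact h' x (by omega) (by omega)
  have h₁ := R.start_add_period_lt
  have h₂ := R'.start_add_period_lt
  have e₁ := R.le_finish_of_hasPeriodOn hglue (by omega)
  have e₂ := R'.le_finish_of_hasPeriodOn (hq ▸ hglue) (by omega)
  have s₁ := R.start_le_of_hasPeriodOn hglue (by omega)
  have s₂ := R'.start_le_of_hasPeriodOn (hq ▸ hglue) (by omega)
  ext <;> omega

theorem period_le_of_window (R : Run a) {u v g : ℕ} (hg : 0 < g) (hwin : HasPeriodOn a u v g)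
    (hu : R.start ≤ u) (hv : v ≤ R.finish) (hlen : u + R.period + g ≤ v) : R.period ≤ g := by
  by_contra h
  exact R.minimal g hg (by omega) (R.hasPeriodOn.of_window R.period_pos hwin hu hv hlen)

theorem eq_of_overlap {R R' : Run a}
    (hov : max R.start R'.start + R.period + R'.period ≤ min R.finish R'.finish) : R = R' := by
  have hwin : HasPeriodOn a (max R.start R'.start) (min R.finish R'.finish)
      (Nat.gcd R.period R'.period) :=
    (R.hasPeriodOn.mono (le_max_left _ _) (min_le_left _ _)).gcd
      (R'.hasPeriodOn.mono (le_max_right _ _) (min_le_right _ _)) hov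
  have hg : 0 < Nat.gcd R.period R'.period := Nat.gcd_pos_of_pos_left _ R.period_pos
  have hle := Nat.gcd_le_left R'.period R.period_pos
  have hle' := Nat.gcd_le_right (m := R.period) R'.period_pos
  have h := R.period_le_of_window hg hwin (le_max_left _ _) (min_le_left _ _) (by omega)
  have h' := R'.period_le_of_window hg hwin (le_max_right _ _) (min_le_right _ _) (by omega)
  exact eq_of_period_eq (by omega) (by omega)

def AtScale (R : Run a) (n N : ℕ) : Prop :=
  R.start + R.period + n ≤ R.finish ∧ R.start + R.period ≤ N

end Run

theorem exists_hasPeriodOn_of_wordComplexity_le [Finite A] {n C : ℕ}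
    (hC : wordComplexity a n ≤ n + C) :
    ∃ i q, 0 < q ∧ i + q ≤ n + C ∧ HasPeriodOn a i (i + q + n) q := by
  obtain ⟨x, hx, y, hy, hne, hxy⟩ := Set.exists_ne_map_eq_of_ncard_lt_of_maps_to
    (s := (Finset.range (n + C + 1) : Set ℕ))
    (t := {w : Fin n → A | ∃ j : ℕ, ∀ i : Fin n, w i = a (j + i)})
    (f := fun j (k : Fin n) => a (j + k))
    (by rw [Set.ncard_coe_finset, Finset.card_range]; exact hC.trans_lt (by omega))
    (fun j _ => ⟨j, fun _ => rfl⟩)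
  wlog hlt : x < y generalizing x y
  · exact this y hy x hx hne.symm hxy.symm (by omega)
  simp only [Finset.coe_range, Set.mem_Iio] at hy
  refine ⟨x, y - x, by omega, by omega, fun z hz hze => ?_⟩
  have := congrFun hxy ⟨z - x, by omega⟩
  simp only at this
  rwa [show x + (z - x) = z by omega, show y + (z - x) = z + (y - x) by omega] at this

theorem exists_maximal_hasPeriodOn (hap : ¬ EventuallyPeriodic a) {i e₀ q : ℕ} (hq : 0 < q)
    (h : HasPeriodOn a i e₀ q) :
    ∃ s e, s ≤ i ∧ e₀ ≤ e ∧ HasPeriodOn a s e q ∧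
      (0 < s → a (s - 1) ≠ a (s - 1 + q)) ∧ a (e - q) ≠ a e := by
  classical
  have hbreak : ∃ x, i ≤ x ∧ a x ≠ a (x + q) := by
    by_contra! hall
    exact hap ⟨q, hq, i, fun x hx => (hall x hx).symm⟩
  obtain ⟨hix, hx⟩ := Nat.find_spec hbreak
  have hright : HasPeriodOn a i (Nat.find hbreak + q) q := fun y hy hye => by
    by_contra hne
    exact Nat.find_min hbreak (by omega) ⟨hy, hne⟩
  have hleft : ∃ s, HasPeriodOn a s (Nat.find hbreak + q) q := ⟨i, hright⟩
  refine ⟨Nat.find hleft, Nat.find hbreak + q, Nat.find_min' hleft hright, ?_, Nat.find_spec hleft,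
    fun hs heq => Nat.find_min hleft (by omega : Nat.find hleft - 1 < Nat.find hleft) ?_, ?_⟩
  · by_contra he
    exact hx (h _ hix (by omega))
  · intro y hy hye
    rcases hy.eq_or_lt with rfl | hy
    · exact heq
    · exact Nat.find_spec hleft y (by omega) hye
  · rwa [Nat.add_sub_cancel]

theorem exists_run [Finite A] (hap : ¬ EventuallyPeriodic a) {n C : ℕ} (hn : 0 < n)
    (hC : wordComplexity a n ≤ n + C) : ∃ R : Run a, R.AtScale n (n + C) := by
  classical
  obtain ⟨i₀, q₀, hq₀, hle, h₀⟩ := exists_hasPeriodOn_of_wordComplexity_le hC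
  have hex : ∃ j, ∃ i q, 0 < q ∧ i + q = j ∧ HasPeriodOn a i (j + n) q := ⟨_, i₀, q₀, hq₀, rfl, h₀⟩
  have hjC : Nat.find hex ≤ n + C := (Nat.find_min' hex ⟨i₀, q₀, hq₀, rfl, h₀⟩).trans hle
  obtain ⟨i, q, hq, hj, hper⟩ := Nat.find_spec hex
  obtain ⟨s, e, hsi, he, hse, hleft, hright⟩ := exists_maximal_hasPeriodOn hap hq hper
  -- A shorter period `p` of the run would already show on `[i, i + p + n)`, against the
  -- minimality of `i + q`.
  have hmin : ∀ p, 0 < p → p < q → ¬ HasPeriodOn a s e p := fun p hp hpq hsp =>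
    Nat.find_min hex (by omega : i + p < Nat.find hex) ⟨i, p, hp, rfl, hsp.mono hsi (by omega)⟩
  exact ⟨⟨s, e, q, hq, by omega, hse, hmin, hleft, hright⟩, by simp only [Run.AtScale]; omega⟩

namespace Run

variable {m n N : ℕ} {R R' : Run a}

theorem min_start_add_lt_of_ne (hR : R.AtScale n N) (hR' : R'.AtScale n N) (hne : R ≠ R') :
    min R.start R'.start + n < N := by
  by_contra h
  exact hne (eq_of_overlap (by simp only [AtScale] at hR hR'; omega))

theorem period_le_of_start_add_lt (hb : BoundedRepetitions a m) (hm : m ≤ n)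
    (hN : 100 * N ≤ 103 * n) (hR : R.AtScale n N) (hR' : R'.AtScale n N)
    (hs : R.start + n < N) : R'.period ≤ R.period := by
  by_contra! hlt
  simp only [AtScale] at hR hR'
  have hcap := hb _ _ _ R.period_pos (by omega) R.hasPeriodOn
  -- Both periods are close to `n`, so their difference `d` is a period of a long segment
  -- starting near the origin.
  set d := R'.period - R.period
  have hd : HasPeriodOn a (max R'.start (R.start - d)) (min R.finish R'.finish - R.period) d := by
    intro x hx hxe
    rw [R'.hasPeriodOn x (by omega) (by omega), show x + R'.period = x + d + R.period by omega]
    exact (R.hasPeriodOn (x + d) (by omega) (by omega)).symm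
  have := hb _ _ _ (by omega) (by omega) hd
  omega

theorem eq_of_start_add_lt (hb : BoundedRepetitions a m) (hm : m ≤ n) (hN : 100 * N ≤ 103 * n)
    (hR : R.AtScale n N) (hR' : R'.AtScale n N) (hs : R.start + n < N)
    (hs' : R'.start + n < N) : R = R' := by
  have h := period_le_of_start_add_lt hb hm hN hR hR' hs
  have h' := period_le_of_start_add_lt hb hm hN hR' hR hs'
  exact eq_of_period_eq (by omega) (by simp only [AtScale] at hR hR'; omega)

theorem eq_or_eq_or_eq_of_atScale (hb : BoundedRepetitions a m) (hm : m ≤ n)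
    (hN : 100 * N ≤ 103 * n) {R₁ R₂ R₃ : Run a} (h₁ : R₁.AtScale n N) (h₂ : R₂.AtScale n N)
    (h₃ : R₃.AtScale n N) : R₁ = R₂ ∨ R₁ = R₃ ∨ R₂ = R₃ := by
  by_contra! hne
  obtain ⟨h₁₂, h₁₃, h₂₃⟩ := hne
  have s₁₂ := min_start_add_lt_of_ne h₁ h₂ h₁₂
  have s₁₃ := min_start_add_lt_of_ne h₁ h₃ h₁₃
  have s₂₃ := min_start_add_lt_of_ne h₂ h₃ h₂₃
  by_cases hs₁ : R₁.start + n < N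
  · by_cases hs₂ : R₂.start + n < N
    · exact h₁₂ (eq_of_start_add_lt hb hm hN h₁ h₂ hs₁ hs₂)
    · exact h₁₃ (eq_of_start_add_lt hb hm hN h₁ h₃ hs₁ (by omega))
  · exact h₂₃ (eq_of_start_add_lt hb hm hN h₂ h₃ (by omega) (by omega))

end Run

theorem not_boundedRepetitions [Finite A] (hap : ¬ EventuallyPeriodic a) {C : ℕ}
    (hC : ∀ n : ℕ, 1 ≤ n → wordComplexity a n ≤ n + C) (m : ℕ) : ¬ BoundedRepetitions a m := by
  intro hb
  set n := 1000 * (C + m + 1)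
  have hcap (R : Run a) (hR : m ≤ R.finish) : 100 * R.finish < 201 * (R.start + R.period) :=
    hb _ _ _ R.period_pos hR R.hasPeriodOn
  -- Each next scale exceeds the reach of the previous run, so the three runs are distinct.
  obtain ⟨R₁, h₁⟩ := exists_run hap (n := n) (by omega) (hC n (by omega))
  set n₂ := R₁.finish - (R₁.start + R₁.period) + 1
  obtain ⟨R₂, h₂⟩ := exists_run hap (n := n₂) (by omega) (hC n₂ (by omega))
  set n₃ := R₂.finish - (R₂.start + R₂.period) + 1
  obtain ⟨R₃, h₃⟩ := exists_run hap (n := n₃) (by omega) (hC n₃ (by omega))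
  simp only [Run.AtScale] at h₁ h₂ h₃
  -- The ratio bound on `R₁` and `R₂` keeps `n₃ + C` within 3% of `n`.
  have c₁ := hcap R₁ (by omega)
  have c₂ := hcap R₂ (by omega)
  rcases Run.eq_or_eq_or_eq_of_atScale (n := n) (N := n₃ + C) (R₁ := R₁) (R₂ := R₂) (R₃ := R₃)
    hb (by omega) (by omega) ⟨by omega, by omega⟩ ⟨by omega, by omega⟩ ⟨by omega, by omega⟩
    with rfl | rfl | rfl <;> omega

end InfiniteWord

/-- If the difference `p(𝐚,n) - n` is bounded, then the Diophantine exponent of `𝐚`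
is greater than `2`. -/
theorem dio_gt_two_of_low_complexity {A : Type*} [Fintype A] (a : ℕ → A)
    (h : ∃ C : ℕ, ∀ n : ℕ, 1 ≤ n → wordComplexity a n ≤ n + C) :
    (2 : EReal) < dio a := by
  obtain ⟨C, hC⟩ := h
  obtain ⟨ρ, hρ, hmem⟩ : ∃ ρ : ℝ, 2 < ρ ∧ ρ ∈ dioSet a := by
    by_cases hap : EventuallyPeriodic a
    · exact ⟨3, by norm_num, InfiniteWord.mem_dioSet_of_eventuallyPeriodic hap 3⟩
    · exact ⟨201 / 100, by norm_num, InfiniteWord.mem_dioSet_of_forall_not_boundedRepetitions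
        (InfiniteWord.not_boundedRepetitions hap hC)⟩
  exact lt_of_lt_of_le (EReal.coe_lt_coe_iff.2 hρ) (le_sSup ⟨ρ, hmem, rfl⟩)

end
end

section
/- Let b ≥ 2 be an integer, let ξ ∈ (0,1) be an irrational real number with base-b expansion 0·a₁a₂⋯, and let 𝐚 = a₁a₂⋯ be its digit sequence. Then the Diophantine exponent of 𝐚 is at most the irrationality exponent of ξ: dio(𝐚) ≤ μ(ξ). -/
/-!
Let `U V^w` be a prefix of length `n ≥ ρ |U V|` of the base-`b` expansion of `ξ`, with
`r = |U|` and `s = |V|`. The rational number with the integer part of `ξ` and digits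
`U V V V ⋯` is `p / Q` with `Q = b^(r+s) - b^r`, and it shares the first `n` digits with `ξ`, so
`|ξ - p/Q| < 1 / (b^(n-r-s) Q) < Q^(-ρ)`, the last step because `Q < b^(r+s)` and
`n ≥ ρ (r + s)`. As `n → ∞` these errors tend to `0`, so irrationality of `ξ` yields
infinitely many such `p / Q`. Exponents `ρ ≤ 2` are covered by Dirichlet's theorem.
-/

open Filter

noncomputable section

section Words

variable {A : Type*}

theorem IsPrefixSeq.getElem_eq {a : ℕ → A} {L : List A} (h : IsPrefixSeq a L) {j : ℕ}
    (hj : j < L.length) : L[j] = a j := by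
  rw [List.getElem_of_eq h hj]
  simp [prefixWord]

theorem getElem_flatten_replicate_add_length (V : List A) (k : ℕ) {i : ℕ}
    (hi : i + V.length < ((List.replicate (k + 1) V).flatten).length) :
    ((List.replicate (k + 1) V).flatten)[i + V.length] =
      ((List.replicate (k + 1) V).flatten)[i] := by
  -- `V ^ (k + 1)` is both `V ++ V ^ k` and `V ^ k ++ V`
  set W := (List.replicate k V).flatten
  have hl : (List.replicate (k + 1) V).flatten = V ++ W := by
    rw [List.replicate_succ, List.flatten_cons]
  have hr : (List.replicate (k + 1) V).flatten = W ++ V := by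
    rw [List.replicate_succ', List.flatten_append, List.flatten_singleton]
  have hiW : i < W.length := by simp only [hl, List.length_append] at hi; omega
  rw [List.getElem_of_eq hl hi, List.getElem_of_eq hr (by omega),
    List.getElem_append_right (by omega), List.getElem_append_left hiW]
  simp

theorem wordPow_prefix_flatten_replicate (V : List A) (w : ℝ) :
    wordPow V w <+: (List.replicate (⌊w⌋₊ + 1) V).flatten := by
  rw [List.replicate_succ', List.flatten_append, List.flatten_singleton, wordPow]
  exact (List.prefix_append_right_inj _).mpr (List.take_prefix _ _)

theorem getElem_wordPow_add_length (V : List A) (w : ℝ) {i : ℕ}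
    (hi : i + V.length < (wordPow V w).length) :
    (wordPow V w)[i + V.length] = (wordPow V w)[i] := by
  have hp := wordPow_prefix_flatten_replicate V w
  rw [hp.getElem hi, hp.getElem (by omega), getElem_flatten_replicate_add_length]

theorem IsPrefixSeq.apply_add_length_eq {a : ℕ → A} {U V : List A} {w : ℝ}
    (h : IsPrefixSeq a (U ++ wordPow V w)) {j : ℕ} (hUj : U.length ≤ j)
    (hj : j + V.length < (U ++ wordPow V w).length) :
    a (j + V.length) = a j := by
  rw [← h.getElem_eq hj, ← h.getElem_eq (by omega),
    List.getElem_append_right (by omega), List.getElem_append_right hUj]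
  simp only [List.length_append] at hj
  simp only [show j + V.length - U.length = j - U.length + V.length by omega]
  exact getElem_wordPow_add_length V w (by omega)

theorem exists_periodic_of_mem_dioSet {a : ℕ → A} {ρ : ℝ} (hρ : ρ ∈ dioSet a) (m : ℕ) :
    ∃ r s n : ℕ, 0 < s ∧ m ≤ n ∧ ρ * (r + s) ≤ n ∧
      ∀ j, r ≤ j → j + s < n → a (j + s) = a j := by
  obtain ⟨U, V, w, hV, -, hm, hpre, hle⟩ := hρ m
  have hs : 0 < V.length := List.length_pos_iff.mpr hV
  refine ⟨U.length, V.length, _, hs, hm, ?_, fun j hUj hj => hpre.apply_add_length_eq hUj hj⟩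
  have hUV : (0 : ℝ) < (U ++ V).length := by rw [List.length_append]; norm_cast; omega
  rw [le_div_iff₀ hUV, List.length_append, Nat.cast_add] at hle
  exact hle

end Words

section Digits

variable {b : ℕ} {ξ : ℝ}

theorem digitSeq_eq_floor (hb : 0 < b) (j : ℕ) :
    (digitSeq b ξ j : ℤ) = ⌊b * Int.fract (ξ * b ^ j)⌋ := by
  set t := Int.fract (ξ * b ^ j)
  have hsplit : Int.fract ξ * (b : ℝ) ^ (j + 1) =
      ((b * (⌊ξ * b ^ j⌋ - ⌊ξ⌋ * b ^ j) : ℤ) : ℝ) + b * t := by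
    simp only [t, Int.fract]
    push_cast
    ring
  have hb' : (0 : ℝ) < b := by exact_mod_cast hb
  have h0 : 0 ≤ ⌊b * t⌋ := Int.floor_nonneg.mpr (by positivity)
  have hlt : ⌊b * t⌋ < b := by
    rw [Int.floor_lt]
    push_cast
    nlinarith [Int.fract_lt_one (ξ * b ^ j)]
  rw [digitSeq, digit, hsplit, Int.floor_intCast_add, Int.mul_add_emod_self_left,
    Int.emod_eq_of_lt h0 hlt, Int.toNat_of_nonneg h0]

theorem fract_mul_pow_succ (hb : 0 < b) (j : ℕ) :
    Int.fract (ξ * b ^ (j + 1)) = b * Int.fract (ξ * b ^ j) - digitSeq b ξ j := by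
  have hsplit : ξ * (b : ℝ) ^ (j + 1) =
      ((b * ⌊ξ * b ^ j⌋ : ℤ) : ℝ) + b * Int.fract (ξ * b ^ j) := by
    rw [Int.fract]
    push_cast
    ring
  rw [hsplit, Int.fract_intCast_add, ← Int.cast_natCast (digitSeq b ξ j), digitSeq_eq_floor hb,
    Int.fract]

theorem fract_mul_pow_sub_of_periodic (hb : 0 < b) {r s n i : ℕ}
    (hper : ∀ j, r ≤ j → j + s < n → digitSeq b ξ (j + s) = digitSeq b ξ j)
    (hi : r + i + s ≤ n) :
    Int.fract (ξ * b ^ (r + i + s)) - Int.fract (ξ * b ^ (r + i)) =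
      b ^ i * (Int.fract (ξ * b ^ (r + s)) - Int.fract (ξ * b ^ r)) := by
  induction i with
  | zero => simp
  | succ i ih =>
    rw [show r + (i + 1) + s = r + i + s + 1 by omega, ← add_assoc, fract_mul_pow_succ hb,
      fract_mul_pow_succ hb, hper (r + i) (by omega) (by omega), pow_succ]
    linear_combination (b : ℝ) * ih (by omega)

theorem abs_fract_mul_pow_sub_mul_lt_one (hb : 0 < b) {r s n : ℕ}
    (hper : ∀ j, r ≤ j → j + s < n → digitSeq b ξ (j + s) = digitSeq b ξ j)
    (hrs : r + s ≤ n) :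
    |Int.fract (ξ * b ^ (r + s)) - Int.fract (ξ * b ^ r)| * b ^ (n - (r + s)) < 1 := by
  set N := n - (r + s)
  have h := fract_mul_pow_sub_of_periodic hb hper (i := N) (by omega)
  rw [show r + N + s = n by omega] at h
  have hpos : (0 : ℝ) ≤ b ^ N := by positivity
  rw [mul_comm, ← abs_of_nonneg hpos, ← abs_mul, ← h, abs_sub_lt_iff]
  constructor <;> linarith [Int.fract_nonneg (ξ * b ^ n), Int.fract_lt_one (ξ * b ^ n),
    Int.fract_nonneg (ξ * b ^ (r + N)), Int.fract_lt_one (ξ * b ^ (r + N))]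

end Digits

section Approximation

variable {b : ℕ} {ξ : ℝ}

-- `q = p / (b^(r+s) - b^r)` is the number whose expansion has preperiod `r` and period `s`.
theorem exists_rat_approx_of_periodic (hb : 2 ≤ b) {r s n : ℕ} (hs : 0 < s) (hrs : r + s ≤ n)
    (hper : ∀ j, r ≤ j → j + s < n → digitSeq b ξ (j + s) = digitSeq b ξ j) :
    ∃ (q : ℚ) (Q : ℕ), 0 < Q ∧ Q < b ^ (r + s) ∧ q.den ≤ Q ∧
      |ξ - q| * (b ^ (n - (r + s)) * Q) < 1 := by
  have hlt : b ^ r < b ^ (r + s) := Nat.pow_lt_pow_right hb (by omega)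
  have hbr : 0 < b ^ r := by positivity
  set Q := b ^ (r + s) - b ^ r
  set p : ℤ := ⌊ξ * b ^ (r + s)⌋ - ⌊ξ * b ^ r⌋
  have hQ : (0 : ℝ) < Q := by simp only [Q]; exact_mod_cast Nat.sub_pos_of_lt hlt
  have hden : (((p : ℚ) / Q).den : ℤ) ≤ Q := by
    rw [← Int.cast_natCast Q, Rat.intCast_div_eq_divInt]
    exact Int.le_of_dvd (by omega) (Rat.den_dvd p Q)
  have hdiff : ξ - ((p / Q : ℚ) : ℝ) =
      (Int.fract (ξ * b ^ (r + s)) - Int.fract (ξ * b ^ r)) / Q := by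
    rw [eq_div_iff hQ.ne', Rat.cast_div, Rat.cast_intCast, Rat.cast_natCast, sub_mul,
      div_mul_cancel₀ _ hQ.ne']
    simp only [Q, p, Int.fract, Nat.cast_sub hlt.le]
    push_cast
    ring
  refine ⟨p / Q, Q, by omega, by omega, by exact_mod_cast hden, ?_⟩
  rw [hdiff, abs_div, abs_of_pos hQ, mul_comm (b ^ _ : ℝ), ← mul_assoc,
    div_mul_cancel₀ _ hQ.ne']
  exact abs_fract_mul_pow_sub_mul_lt_one (by omega) hper hrs

theorem rpow_lt_pow_mul_of_lt_pow {B Q ρ : ℝ} {k e : ℕ} (hB : 0 ≤ B) (hQ : 1 ≤ Q)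
    (hQB : Q < B ^ k) (he : 0 < e) (hρ : ρ * k ≤ k + e) : Q ^ ρ < B ^ e * Q := by
  have hk : 0 < k := Nat.pos_of_ne_zero fun hk => by simp [hk] at hQB; linarith
  have hk' : (0 : ℝ) < k := by exact_mod_cast hk
  have hBk : (B ^ k) ^ ((e : ℝ) / k) = B ^ e := by
    rw [← Real.rpow_natCast B k, ← Real.rpow_mul hB, mul_div_cancel₀ _ hk'.ne',
      Real.rpow_natCast]
  have hρ' : ρ ≤ 1 + (e : ℝ) / k := by rwa [one_add_div hk'.ne', le_div_iff₀ hk']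
  calc Q ^ ρ ≤ Q ^ (1 + (e : ℝ) / k) := Real.rpow_le_rpow_of_exponent_le hQ hρ'
    _ = Q * Q ^ ((e : ℝ) / k) := by rw [Real.rpow_add (by linarith), Real.rpow_one]
    _ < Q * (B ^ k) ^ ((e : ℝ) / k) := by gcongr
    _ = B ^ e * Q := by rw [hBk, mul_comm]

theorem exists_rat_approx_of_mem_dioSet (hb : 2 ≤ b) {ρ : ℝ} (hρ : 2 < ρ)
    (hdio : ρ ∈ dioSet (digitSeq b ξ)) {ε : ℝ} (hε : 0 < ε) :
    ∃ q : ℚ, |ξ - q| < 1 / (q.den : ℝ) ^ ρ ∧ |ξ - q| < ε := by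
  have hb1 : (1 : ℝ) < b := by exact_mod_cast hb
  obtain ⟨N₀, hN₀⟩ := pow_unbounded_of_one_lt ε⁻¹ hb1
  obtain ⟨r, s, n, hs, hn, hρn, hper⟩ := exists_periodic_of_mem_dioSet hdio (2 * N₀ + 1)
  have hrs : 2 * (r + s) < n := by
    have : (2 : ℝ) * (r + s) < n := by nlinarith [(by exact_mod_cast hs : (0 : ℝ) < s)]
    exact_mod_cast this
  obtain ⟨q, Q, hQ, hQb, hden, happrox⟩ := exists_rat_approx_of_periodic hb hs (by omega) hper
  set N := n - (r + s)
  have hD : (0 : ℝ) < b ^ N * Q := by positivity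
  have hlt : |ξ - q| < 1 / (b ^ N * Q) := by rwa [lt_div_iff₀ hD]
  refine ⟨q, hlt.trans_le ?_, hlt.trans ?_⟩
  · have hpow : (Q : ℝ) ^ ρ < b ^ N * Q :=
      rpow_lt_pow_mul_of_lt_pow (by positivity) (by exact_mod_cast hQ) (by exact_mod_cast hQb)
        (by omega) (by rw [show n = r + s + N by omega] at hρn; push_cast at hρn ⊢; linarith)
    gcongr
    exact (Real.rpow_le_rpow (by positivity) (by exact_mod_cast hden) (by linarith)).trans
      hpow.le
  · rw [div_lt_iff₀ hD, ← div_lt_iff₀' hε, one_div]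
    calc ε⁻¹ < (b : ℝ) ^ N₀ := hN₀
      _ ≤ b ^ N := pow_le_pow_right₀ hb1.le (by omega)
      _ ≤ b ^ N * Q := le_mul_of_one_le_right (by positivity) (by exact_mod_cast hQ)

theorem Irrational.infinite_of_forall_exists_abs_sub_lt (hξ : Irrational ξ) {S : Set ℚ}
    (h : ∀ ε > 0, ∃ q ∈ S, |ξ - q| < ε) : S.Infinite := by
  intro hfin
  obtain ⟨q₀, hq₀, -⟩ := h 1 one_pos
  obtain ⟨q, -, hmin⟩ := S.exists_min_image (fun q : ℚ => |ξ - q|) hfin ⟨q₀, hq₀⟩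
  obtain ⟨q', hq', hlt⟩ := h |ξ - q| (abs_pos.mpr (sub_ne_zero.mpr (hξ.ne_rat q)))
  exact (hmin q' hq').not_gt hlt

end Approximation

theorem two_mem_muSet {ξ : ℝ} (hξ : Irrational ξ) : 2 ∈ muSet ξ := by
  simpa only [muSet, Set.mem_ofPred_eq, Real.rpow_two] using
    Real.infinite_rat_abs_sub_lt_one_div_den_sq_of_irrational hξ

theorem mem_muSet_of_mem_dioSet {b : ℕ} (hb : 2 ≤ b) {ξ : ℝ} (hξ : Irrational ξ) {ρ : ℝ}
    (hρ : 2 < ρ) (hdio : ρ ∈ dioSet (digitSeq b ξ)) : ρ ∈ muSet ξ :=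
  hξ.infinite_of_forall_exists_abs_sub_lt fun _ =>
    exists_rat_approx_of_mem_dioSet hb hρ hdio

theorem dio_le_mu_general (b : ℕ) (hb : 2 ≤ b) (ξ : ℝ)
    (hirr : Irrational ξ) :
    dio (digitSeq b ξ) ≤ mu ξ := by
  refine sSup_le ?_
  rintro _ ⟨ρ, hρ, rfl⟩
  rcases le_or_gt ρ 2 with hρ2 | hρ2
  · exact (EReal.coe_le_coe_iff.mpr hρ2).trans (le_sSup ⟨2, two_mem_muSet hirr, rfl⟩)
  · exact le_sSup ⟨ρ, mem_muSet_of_mem_dioSet hb hirr hρ2 hρ, rfl⟩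

/-- The Diophantine exponent of the base-`b` digit sequence of an irrational
`ξ ∈ (0,1)` is at most the irrationality exponent of `ξ`. -/
theorem dio_le_mu (b : ℕ) (hb : 2 ≤ b) (ξ : ℝ) (hξ : ξ ∈ Set.Ioo (0 : ℝ) 1)
    (hirr : Irrational ξ) :
    dio (digitSeq b ξ) ≤ mu ξ :=
  dio_le_mu_general b hb ξ hirr

end
end

section
/- Let 𝐬 = s₁s₂⋯ be a Sturmian word over {0,1} with slope α ∈ (0,1), i.e. lim_{n→∞} |s₁⋯s_n|₁ / n = α. Let φ be a nonerasing monoid morphism from {0,1}* into 𝒜* for a finite alphabet 𝒜, let W be a finite word over 𝒜, and set 𝐚 = W φ(𝐬). Then dio(𝐚) ≥ dio(𝐬). -/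
open Filter

noncomputable section

/-! The length of `W φ(s₁⋯sₙ)` is `c n + o(n)`: the constant `c` exists because the letter `1` has
a frequency, and `c ≥ 1` because `φ` is nonerasing. The morphism maps a factorization `U V^w` of a
prefix of `𝐬` to the factorization `(W φ(U)) φ(V)^{w'}` of a prefix of `𝐚`, and the two ratios of
lengths differ only through the `o(n)` terms. So if ratios `≥ ρ` occur along arbitrarily long
prefixes of `𝐬`, ratios `≥ ρ'` occur along arbitrarily long prefixes of `𝐚` for every `ρ' < ρ`. -/

open Topology

section Words

variable {A B : Type*}

lemma prefixWord_length (a : ℕ → A) (n : ℕ) : (prefixWord a n).length = n := by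
  simp [prefixWord]

lemma prefixWord_take (a : ℕ → A) (m n : ℕ) :
    (prefixWord a n).take m = prefixWord a (min m n) := by
  simp only [prefixWord, ← List.map_take, List.take_range]

lemma IsPrefixSeq.of_prefix {a : ℕ → A} {L L' : List A} (hL : IsPrefixSeq a L)
    (h : L' <+: L) : IsPrefixSeq a L' :=
  calc L' = L.take L'.length := List.prefix_iff_eq_take.mp h
    _ = (prefixWord a L.length).take L'.length := by rw [← hL]
    _ = prefixWord a L'.length := by rw [prefixWord_take, min_eq_left h.length_le]

lemma wordPow_one (V : List A) : wordPow V 1 = V := by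
  simp [wordPow]

lemma wordPow_natCast_add_div (V : List A) (k : ℕ) {ℓ : ℕ} (hℓ : ℓ ≤ V.length) :
    wordPow V (k + ℓ / V.length) = (List.replicate k V).flatten ++ V.take ℓ := by
  rcases hℓ.lt_or_eq with hlt | rfl
  · have hV : (0 : ℝ) < V.length := by exact_mod_cast (Nat.zero_le ℓ).trans_lt hlt
    have hfrac : (ℓ : ℝ) / V.length < 1 := (div_lt_one hV).mpr (by exact_mod_cast hlt)
    have hfloor : ⌊(k : ℝ) + ℓ / V.length⌋₊ = k := by
      rw [add_comm, Nat.floor_add_natCast (by positivity), Nat.floor_eq_zero.mpr hfrac, zero_add]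
    rw [wordPow, hfloor, add_sub_cancel_left, div_mul_cancel₀ _ hV.ne', Nat.ceil_natCast]
  · by_cases hV0 : V = []
    · simp [hV0, wordPow]
    · have hV : (V.length : ℝ) ≠ 0 := by simpa using hV0
      rw [div_self hV, List.take_length, ← Nat.cast_add_one, wordPow, Nat.floor_natCast, sub_self,
        zero_mul, Nat.ceil_zero, List.take_zero, List.append_nil, List.replicate_succ',
        List.flatten_append, List.flatten_singleton]

lemma prefix_wordPow_of_length_lt {V : List A} {w : ℝ}
    (h : V.length < (wordPow V w).length) : V <+: wordPow V w := by
  rcases hk : ⌊w⌋₊ with _ | k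
  · simp only [wordPow, hk, List.replicate_zero, List.flatten_nil, List.nil_append,
      List.length_take] at h
    omega
  · rw [wordPow, hk, List.replicate_succ, List.flatten_cons, List.append_assoc]
    exact List.prefix_append _ _

lemma mem_dioSet_of_le_one (a : ℕ → A) {ρ : ℝ} (hρ : ρ ≤ 1) : ρ ∈ dioSet a := by
  intro m
  have hlen : (prefixWord a (m + 1)).length = m + 1 := prefixWord_length a (m + 1)
  refine ⟨[], prefixWord a (m + 1), 1, List.ne_nil_of_length_pos (by omega), one_pos, ?_, ?_, ?_⟩ <;>
    simp only [List.nil_append, wordPow_one]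
  · omega
  · rw [IsPrefixSeq, hlen]
  · rwa [div_self (by rw [hlen]; positivity)]

lemma flatMap_ne_nil {φ : A → List B} (hφ : ∀ x, φ x ≠ []) {X : List A} (hX : X ≠ []) :
    X.flatMap φ ≠ [] := by
  obtain ⟨x, hx⟩ := List.exists_mem_of_ne_nil X hX
  rw [Ne, List.flatMap_eq_nil_iff]
  exact fun h => hφ x (h x hx)

lemma length_le_length_append_flatMap {φ : A → List B} (hφ : ∀ x, φ x ≠ []) (W : List B)
    (X : List A) : X.length ≤ (W ++ X.flatMap φ).length := by
  induction X with
  | nil => simp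
  | cons x X ih =>
    have := List.length_pos_iff.mpr (hφ x)
    simp only [List.flatMap_cons, List.length_append, List.length_cons] at ih ⊢
    omega

lemma flatMap_flatten_replicate (φ : A → List B) (k : ℕ) (V : List A) :
    (List.replicate k V).flatten.flatMap φ = (List.replicate k (V.flatMap φ)).flatten := by
  induction k with
  | zero => simp
  | succ k ih => simp [List.replicate_succ, ih]

lemma exists_flatMap_wordPow {φ : A → List B} (hφ : ∀ x, φ x ≠ []) {V : List A} (hV : V ≠ [])
    {w : ℝ} (hw : 0 < w) :
    ∃ w' : ℝ, 0 < w' ∧ (wordPow V w).flatMap φ = wordPow (V.flatMap φ) w' := by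
  set t := ⌈(w - ⌊w⌋₊) * V.length⌉₊
  have hpre : (V.take t).flatMap φ <+: V.flatMap φ := (V.take_prefix t).flatMap φ
  set ℓ := ((V.take t).flatMap φ).length
  refine ⟨⌊w⌋₊ + ℓ / (V.flatMap φ).length, ?_, ?_⟩
  · rcases Nat.eq_zero_or_pos ⌊w⌋₊ with hk | hk
    · have ht : 0 < t := Nat.ceil_pos.mpr <| by
        rw [hk, Nat.cast_zero, sub_zero]
        exact mul_pos hw (by exact_mod_cast List.length_pos_iff.mpr hV)
      have hℓ : 0 < ℓ := List.length_pos_iff.mpr <|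
        flatMap_ne_nil hφ (by simpa [List.take_eq_nil_iff, hV] using ht.ne')
      have := List.length_pos_iff.mpr (flatMap_ne_nil hφ hV)
      rw [hk]
      positivity
    · positivity
  · rw [wordPow_natCast_add_div _ _ hpre.length_le, ← List.prefix_iff_eq_take.mp hpre, wordPow,
      List.flatMap_append, flatMap_flatten_replicate]

lemma length_flatMap_fin_two (φ : Fin 2 → List A) (X : List (Fin 2)) :
    ((X.flatMap φ).length : ℝ) =
      (φ 0).length * X.length + ((φ 1).length - (φ 0).length) * X.count 1 := by
  induction X with
  | nil => simp
  | cons x X ih =>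
    rw [List.flatMap_cons, List.length_append, Nat.cast_add, ih]
    fin_cases x <;>
      simp only [Fin.zero_eta, Fin.mk_one, Fin.isValue, List.length_cons, Nat.cast_add,
        Nat.cast_one, List.count_cons_self, List.count_cons_of_ne, ne_eq, zero_ne_one,
        not_false_eq_true] <;>
      ring

lemma HasSlope.tendsto_length_div {s : ℕ → Fin 2} {α : ℝ} (hs : HasSlope s α)
    (φ : Fin 2 → List A) (W : List A) :
    Tendsto (fun n : ℕ => ((W ++ (prefixWord s n).flatMap φ).length : ℝ) / n) atTop
      (𝓝 ((φ 0).length + ((φ 1).length - (φ 0).length) * α)) := by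
  have hlim := (tendsto_const_div_atTop_nhds_zero_nat (W.length : ℝ)).add
    ((hs.const_mul (((φ 1).length : ℝ) - (φ 0).length)).const_add ((φ 0).length : ℝ))
  rw [zero_add] at hlim
  refine hlim.congr' ?_
  filter_upwards [eventually_gt_atTop 0] with n hn
  have hn' : (n : ℝ) ≠ 0 := by exact_mod_cast hn.ne'
  rw [List.length_append, Nat.cast_add, length_flatMap_fin_two, prefixWord_length]
  field_simp

end Words

lemma exists_abs_sub_mul_le_of_tendsto_div {f : ℕ → ℝ} {c : ℝ}
    (hf : Tendsto (fun n : ℕ => f n / n) atTop (𝓝 c)) {ε : ℝ} (hε : 0 < ε) :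
    ∃ C, ∀ n : ℕ, |f n - c * n| ≤ ε * n + C := by
  have hev : ∀ᶠ n : ℕ in atTop, |f n - c * n| - ε * n ≤ 0 := by
    filter_upwards [hf.eventually (Metric.ball_mem_nhds c hε), eventually_gt_atTop 0]
      with n hn hpos
    have hn' : (0 : ℝ) < n := by exact_mod_cast hpos
    have : f n - c * n = (f n / n - c) * n := by field_simp
    rw [this, abs_mul, abs_of_pos hn', sub_nonpos]
    exact mul_le_mul_of_nonneg_right (le_of_lt hn) hn'.le
  obtain ⟨C, hC⟩ := (isBoundedUnder_of_eventually_le hev).bddAbove_range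
  exact ⟨C, fun n => by linarith [hC (Set.mem_range_self n)]⟩

lemma eventually_mul_le_of_tendsto_div {f : ℕ → ℝ} {c : ℝ}
    (hf : Tendsto (fun n : ℕ => f n / n) atTop (𝓝 c)) (hc : 0 < c) {ρ ρ' : ℝ}
    (hρ' : 0 ≤ ρ') (hlt : ρ' < ρ) :
    ∀ᶠ n : ℕ in atTop, ∀ m : ℕ, ρ * m ≤ n → ρ' * f m ≤ f n := by
  have hρ : 0 < ρ := hρ'.trans_lt hlt
  set ε := c * (ρ - ρ') / (2 * (ρ + ρ'))
  have hε : 0 < ε := div_pos (mul_pos hc (by linarith)) (by linarith)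
  have hgap : ρ * (c - ε) = ρ' * (c + ε) + c * (ρ - ρ') / 2 := by
    simp only [ε]
    field_simp
    ring
  obtain ⟨C, hC⟩ := exists_abs_sub_mul_le_of_tendsto_div hf hε
  filter_upwards [eventually_ge_atTop ⌈2 * ρ * (1 + ρ') * C / (c * (ρ - ρ'))⌉₊] with n hn m hm
  have hfm : f m ≤ (c + ε) * m + C := by linarith [(abs_le.mp (hC m)).2]
  have hfn : (c - ε) * n - C ≤ f n := by linarith [(abs_le.mp (hC n)).1]
  have hnC : 2 * ρ * (1 + ρ') * C ≤ c * (ρ - ρ') * n := by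
    rw [← div_le_iff₀' (mul_pos hc (by linarith))]
    exact (Nat.ceil_le.mp hn)
  have hcε : 0 ≤ ρ' * (c + ε) := by positivity
  refine le_of_mul_le_mul_left ?_ hρ
  calc ρ * (ρ' * f m) ≤ ρ' * (c + ε) * (ρ * m) + ρ * ρ' * C := by
        nlinarith [mul_le_mul_of_nonneg_left hfm (mul_nonneg hρ.le hρ')]
    _ ≤ ρ' * (c + ε) * n + ρ * ρ' * C := by gcongr
    _ ≤ ρ * ((c - ε) * n - C) := by nlinarith
    _ ≤ ρ * f n := by gcongr

section Dio

variable {A B : Type*}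

lemma dio_le_dio_of_forall_lt_mem {a : ℕ → A} {b : ℕ → B}
    (h : ∀ ρ ∈ dioSet b, ∀ ρ', 1 < ρ' → ρ' < ρ → ρ' ∈ dioSet a) : dio b ≤ dio a := by
  refine sSup_le ?_
  rintro _ ⟨ρ, hρ, rfl⟩
  refine EReal.ge_of_forall_gt_iff_ge.mp fun ρ' hρ' => le_sSup ⟨ρ', ?_, rfl⟩
  rcases le_or_gt ρ' 1 with h1 | h1
  · exact mem_dioSet_of_le_one a h1
  · exact h ρ hρ ρ' h1 (EReal.coe_lt_coe_iff.mp hρ')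

lemma mem_dioSet_of_flatMap {b : ℕ → B} {φ : B → List A} (hφ : ∀ x, φ x ≠ []) {W : List A}
    {a : ℕ → A} (ha : ∀ n, IsPrefixSeq a (W ++ (prefixWord b n).flatMap φ)) {ρ ρ' : ℝ}
    (hρ : ρ ∈ dioSet b) (hρ1 : 1 < ρ)
    (hlen : ∀ᶠ n : ℕ in atTop, ∀ m : ℕ, ρ * m ≤ n →
      ρ' * (W ++ (prefixWord b m).flatMap φ).length ≤ (W ++ (prefixWord b n).flatMap φ).length) :
    ρ' ∈ dioSet a := by
  intro m₀
  obtain ⟨N, hN⟩ := eventually_atTop.mp hlen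
  obtain ⟨U, V, w, hV, hw, hlong, hpre, hratio⟩ := hρ (max m₀ N)
  set n := (U ++ wordPow V w).length
  set m := (U ++ V).length
  have hm : (0 : ℝ) < m := by
    have := List.length_pos_iff.mpr hV
    simp only [m, List.length_append]
    positivity
  have hρm : ρ * m ≤ n := (le_div_iff₀ hm).mp hratio
  have hmn : m < n := by exact_mod_cast (by nlinarith : (m : ℝ) < n)
  have hUV : IsPrefixSeq b (U ++ V) := hpre.of_prefix <| (List.prefix_append_right_inj U).mpr <|
    prefix_wordPow_of_length_lt (by simp only [m, n, List.length_append] at hmn; omega)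
  obtain ⟨w', hw', himage⟩ := exists_flatMap_wordPow hφ hV hw
  have hnum : W ++ U.flatMap φ ++ wordPow (V.flatMap φ) w' = W ++ (prefixWord b n).flatMap φ := by
    rw [← himage, List.append_assoc, ← List.flatMap_append, ← hpre]
  have hden : W ++ U.flatMap φ ++ V.flatMap φ = W ++ (prefixWord b m).flatMap φ := by
    rw [List.append_assoc, ← List.flatMap_append, ← hUV]
  have hlen_ge (k : ℕ) : k ≤ (W ++ (prefixWord b k).flatMap φ).length := by
    simpa only [prefixWord_length] using length_le_length_append_flatMap hφ W (prefixWord b k)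
  refine ⟨W ++ U.flatMap φ, V.flatMap φ, w', flatMap_ne_nil hφ hV, hw', ?_, ?_, ?_⟩
  · rw [hnum]
    exact (le_max_left m₀ N).trans (hlong.trans (hlen_ge n))
  · rw [hnum]
    exact ha n
  · rw [hnum, hden, le_div_iff₀ (hm.trans_le (by exact_mod_cast hlen_ge m))]
    exact hN n ((le_max_right m₀ N).trans hlong) m hρm

lemma dio_le_dio_of_tendsto_length_div {b : ℕ → B} {φ : B → List A} (hφ : ∀ x, φ x ≠ [])
    {W : List A} {a : ℕ → A} (ha : ∀ n, IsPrefixSeq a (W ++ (prefixWord b n).flatMap φ))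
    {c : ℝ} (hc : Tendsto (fun n : ℕ => ((W ++ (prefixWord b n).flatMap φ).length : ℝ) / n)
      atTop (𝓝 c)) :
    dio b ≤ dio a := by
  have hc1 : 1 ≤ c := by
    refine ge_of_tendsto hc ?_
    filter_upwards [eventually_gt_atTop 0] with n hn
    rw [le_div_iff₀ (by exact_mod_cast hn), one_mul, Nat.cast_le]
    simpa only [prefixWord_length] using length_le_length_append_flatMap hφ W (prefixWord b n)
  exact dio_le_dio_of_forall_lt_mem fun ρ hρ ρ' hρ' hlt =>
    mem_dioSet_of_flatMap hφ ha hρ (hρ'.trans hlt)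
      (eventually_mul_le_of_tendsto_div hc (by linarith) (by linarith) hlt)

end Dio

theorem dio_ge_of_sturmian_morphic_image_general {A : Type*} (s : ℕ → Fin 2)
    (α : ℝ) (hslope : HasSlope s α)
    (φ : Fin 2 → List A) (hφ : ∀ i : Fin 2, φ i ≠ []) (W : List A) (a : ℕ → A)
    (ha : ∀ n : ℕ, IsPrefixSeq a (W ++ ((prefixWord s n).map φ).flatten)) :
    dio s ≤ dio a :=
  dio_le_dio_of_tendsto_length_div hφ ha (hslope.tendsto_length_div φ W)

/-- If `𝐚 = W φ(𝐬)` for a Sturmian word `𝐬` with slope `α`, a nonerasing morphism `φ`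
and a finite word `W`, then `dio(𝐚) ≥ dio(𝐬)`. -/
theorem dio_ge_of_sturmian_morphic_image {A : Type*} [Fintype A] (s : ℕ → Fin 2)
    (hs : IsSturmian s) (α : ℝ) (hα : α ∈ Set.Ioo (0 : ℝ) 1) (hslope : HasSlope s α)
    (φ : Fin 2 → List A) (hφ : ∀ i : Fin 2, φ i ≠ []) (W : List A) (a : ℕ → A)
    (ha : ∀ n : ℕ, IsPrefixSeq a (W ++ ((prefixWord s n).map φ).flatten)) :
    dio s ≤ dio a :=
  dio_ge_of_sturmian_morphic_image_general s α hslope φ hφ W a ha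

end
end

section
/- Let 𝐚 be an aperiodic (not eventually periodic) infinite word over a finite alphabet such that the difference p(𝐚,n) − n is bounded. Then there exist positive integers k and n₀ such that p(𝐚,n) = n + k for every n ≥ n₀. -/
open Filter

noncomputable section

set_option linter.unusedSectionVars false
namespace AperAux

variable {A : Type*} [Fintype A]

def S (a : ℕ → A) (n : ℕ) : Set (Fin n → A) :=
  {w : Fin n → A | ∃ j : ℕ, ∀ i : Fin n, w i = a (j + i)}

def win (a : ℕ → A) (n j : ℕ) : Fin n → A := fun i => a (j + i)

lemma win_mem (a : ℕ → A) (n j : ℕ) : win a n j ∈ S a n := ⟨j, fun _ => rfl⟩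

lemma image_restrict (a : ℕ → A) (n : ℕ) :
    (fun w : Fin (n+1) → A => w ∘ Fin.castSucc) '' S a (n+1) = S a n := by
  ext w
  constructor
  · rintro ⟨v, ⟨j, hj⟩, rfl⟩
    refine ⟨j, fun i => ?_⟩
    simpa using hj i.castSucc
  · rintro ⟨j, hj⟩
    refine ⟨win a (n+1) j, win_mem a _ j, ?_⟩
    funext i
    simp [win, hj i]

lemma mono (a : ℕ → A) (n : ℕ) : (S a n).ncard ≤ (S a (n+1)).ncard := by
  calc (S a n).ncard = ((fun w : Fin (n+1) → A => w ∘ Fin.castSucc) '' S a (n+1)).ncard := by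
        rw [image_restrict]
    _ ≤ (S a (n+1)).ncard := Set.ncard_image_le (Set.toFinite _)

lemma mh (a : ℕ → A) (n : ℕ) (h : (S a (n+1)).ncard ≤ (S a n).ncard) :
    EventuallyPeriodic a := by
  have hcard : ((fun w : Fin (n+1) → A => w ∘ Fin.castSucc) '' S a (n+1)).ncard
      = (S a (n+1)).ncard := by
    rw [image_restrict]
    exact le_antisymm (mono a n) h
  have hinj : Set.InjOn (fun w : Fin (n+1) → A => w ∘ Fin.castSucc) (S a (n+1)) :=
    Set.injOn_of_ncard_image_eq hcard (Set.toFinite _)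
  have det : ∀ j j' : ℕ, (∀ i : Fin n, a (j + i) = a (j' + i)) → a (j + n) = a (j' + n) := by
    intro j j' hj
    have hv : win a (n+1) j = win a (n+1) j' := by
      apply hinj (win_mem a (n+1) j) (win_mem a (n+1) j')
      funext i
      simpa [win] using hj i
    have := congrFun hv (Fin.last n)
    simpa [win, Fin.val_last] using this
  obtain ⟨j1, j2, hne, heq⟩ := Finite.exists_ne_map_eq_of_infinite (fun j : ℕ => win a n j)
  wlog hlt : j1 < j2 generalizing j1 j2
  · exact this j2 j1 hne.symm heq.symm (by omega)
  have key : ∀ t : ℕ, a (j1 + t) = a (j2 + t) := by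
    intro t
    induction t using Nat.strong_induction_on with
    | _ t ih =>
      rcases lt_or_ge t n with ht | ht
      · exact congrFun heq (⟨t, ht⟩ : Fin n)
      · have hdet := det (j1 + (t - n)) (j2 + (t - n)) (fun i => by
          have hi := i.isLt
          have h1 : (t - n) + (i : ℕ) < t := by omega
          have h2 := ih ((t - n) + (i : ℕ)) h1
          have e1 : j1 + (t - n) + (i : ℕ) = j1 + ((t - n) + (i : ℕ)) := by omega
          have e2 : j2 + (t - n) + (i : ℕ) = j2 + ((t - n) + (i : ℕ)) := by omega
          rw [e1, e2]; exact h2)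
        have e1 : j1 + (t - n) + n = j1 + t := by omega
        have e2 : j2 + (t - n) + n = j2 + t := by omega
        rwa [e1, e2] at hdet
  refine ⟨j2 - j1, by omega, j1, fun m hm => ?_⟩
  have e1 : m + (j2 - j1) = j2 + (m - j1) := by omega
  have e2 : m = j1 + (m - j1) := by omega
  rw [e1, ← key (m - j1), ← e2]

end AperAux

/-- If `𝐚` is aperiodic and `p(𝐚,n) - n` is bounded, then there are positive integers
`k` and `n₀` with `p(𝐚,n) = n + k` for all `n ≥ n₀`. -/
theorem complexity_eventually_n_plus_k {A : Type*} [Fintype A] (a : ℕ → A)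
    (hper : ¬ EventuallyPeriodic a)
    (h : ∃ C : ℕ, ∀ n : ℕ, 1 ≤ n → wordComplexity a n ≤ n + C) :
    ∃ k n₀ : ℕ, 0 < k ∧ 0 < n₀ ∧ ∀ n : ℕ, n₀ ≤ n → wordComplexity a n = n + k := by
  obtain ⟨C, hC⟩ := h
  have step : ∀ n : ℕ, wordComplexity a n + 1 ≤ wordComplexity a (n + 1) := by
    intro n
    by_contra hcon
    push_neg at hcon
    exact hper (AperAux.mh a n (Nat.lt_succ_iff.mp hcon))
  have lower : ∀ n : ℕ, n + 1 ≤ wordComplexity a n := by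
    intro n
    induction n with
    | zero =>
      exact (Set.ncard_pos (Set.toFinite _)).mpr ⟨_, AperAux.win_mem a 0 0⟩
    | succ n ih =>
      have := step n
      omega
  set d : ℕ → ℕ := fun n => wordComplexity a n - n with hd
  have dmono : Monotone d := by
    apply monotone_nat_of_le_succ
    intro n
    have h1 := step n
    have h2 := lower n
    simp only [hd]
    omega
  have dbdd : ∀ n : ℕ, d (n + 1) ≤ C := by
    intro n
    have := hC (n + 1) (by omega)
    have := lower (n + 1)
    simp only [hd]
    omega
  set R : Set ℕ := Set.range (fun n => d (n + 1)) with hR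
  have hRne : R.Nonempty := ⟨d 1, ⟨0, rfl⟩⟩
  have hRbdd : BddAbove R := by
    refine ⟨C, fun x hx => ?_⟩
    obtain ⟨n, rfl⟩ := hx
    exact dbdd n
  obtain ⟨n₀, hn₀⟩ : ∃ m : ℕ, d (m + 1) = sSup R := Nat.sSup_mem hRne hRbdd
  refine ⟨sSup R, n₀ + 1, ?_, by omega, ?_⟩
  · have := lower (n₀ + 1)
    simp only [hd] at hn₀
    omega
  · intro n hn
    have hmem : d n ∈ R := ⟨n - 1, show d (n - 1 + 1) = d n by congr 1; omega⟩
    have hle : d n ≤ sSup R := le_csSup hRbdd hmem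
    have hge : sSup R ≤ d n := hn₀ ▸ dmono hn
    have := lower n
    simp only [hd] at hle hge
    omega

end
end

section
/- The irrationality exponent of Euler's number e is equal to 2: μ(e) = 2. -/
open Filter

noncomputable section

/-!
Hermite's integrals `J n = ∫₀¹ e^(1-x) (x(1-x))^n dx` equal `e S(0) - S(1)`, where `S` is the sum
of all derivatives of `x^n (1-x)^n`; since this polynomial vanishes to order `n` at `0` and `1`,
`n!` divides `S(0)` and `S(1)`. This produces integer linear forms `b n * e - a n = J n / n!`
of size between `(3/16)^n / (2 n!)` and `3 / (4^n n!)`, with `|b n| ≤ 24^n n!`.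

Given `p/q`, let `n` be the least index with `|b n * e - a n| < 1/(2q)`. Then
`|e - p/q| ≥ |b n * e - a n| / |b n|`, while minimality gives `q ≥ 1 / (2 |b (n-1) * e - a (n-1)|)`.
As `n!` outgrows every exponential, `|b n| / |b n * e - a n| ≈ (n!)^2` is eventually below
`(1 / (2 |b (n-1) * e - a (n-1)|))^(2+ε)`, so `|e - p/q| < q^(-2-ε)` has only finitely many
solutions. Dirichlet's theorem gives the reverse inequality.
-/

open Topology Polynomial
open scoped Nat

theorem abs_linearForm_le_mul_abs_sub_rat {ξ : ℝ} {a b : ℤ} {r : ℚ}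
    (hlt : |b * ξ - a| < 1 / (2 * r.den)) : |b * ξ - a| ≤ |(b : ℝ)| * |ξ - r| := by
  have hr : (r : ℝ) * r.den = r.num := by exact_mod_cast Rat.mul_den_eq_num r
  set q : ℝ := (r.den : ℝ)
  have hq : 0 < q := Nat.cast_pos.mpr r.pos
  have hqδ : q * |b * ξ - a| < 1 / 2 := by
    rw [lt_div_iff₀ (by positivity)] at hlt
    linarith
  have hD : ((r.den * a - r.num * b : ℤ) : ℝ) = b * q * (ξ - r) - q * (b * ξ - a) := by
    push_cast
    rw [← hr]
    ring
  -- The integer `den r * a - num r * b` is either `0` or at least `1` in absolute value.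
  by_cases hD0 : r.den * a - r.num * b = 0
  · have h : q * |b * ξ - a| = q * (|(b : ℝ)| * |ξ - r|) := by
      rw [hD0, Int.cast_zero, eq_comm, sub_eq_zero] at hD
      rw [← abs_of_pos hq, ← abs_mul, ← hD, abs_mul, abs_mul]
      ring
    exact (mul_left_cancel₀ hq.ne' h).le
  · have h1 : (1 : ℝ) ≤ |b * q * (ξ - r) - q * (b * ξ - a)| := by
      rw [← hD]
      exact_mod_cast Int.one_le_abs hD0
    have h2 : |b * q * (ξ - r) - q * (b * ξ - a)| ≤
        q * (|(b : ℝ)| * |ξ - r|) + q * |b * ξ - a| := by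
      refine (abs_sub _ _).trans_eq ?_
      rw [abs_mul, abs_mul, abs_mul, abs_of_pos hq]
      ring
    nlinarith

theorem Rat.finite_setOf_den_le_abs_sub_lt_one (ξ : ℝ) (Q : ℕ) :
    {r : ℚ | r.den ≤ Q ∧ |ξ - r| < 1}.Finite := by
  refine ((Set.finite_Iic Q).biUnion fun d _ =>
    (Set.finite_Icc ⌊(ξ - 1) * d⌋ ⌈(ξ + 1) * d⌉).image fun p : ℤ => (p / d : ℚ)).subset ?_
  rintro r ⟨hden, hr⟩
  have hnum : (r.num : ℝ) = r * r.den := by exact_mod_cast (Rat.mul_den_eq_num r).symm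
  obtain ⟨h1, h2⟩ := abs_sub_lt_iff.mp hr
  refine Set.mem_biUnion (x := r.den) hden ⟨r.num, ⟨?_, ?_⟩, Rat.num_div_den r⟩
  · exact Int.floor_le_iff.mpr (by rw [hnum]; nlinarith)
  · exact Int.le_ceil_iff.mpr (by rw [hnum]; nlinarith)

theorem Filter.Tendsto.exists_succ_lt_le {α : Type*} [LinearOrder α] [TopologicalSpace α]
    [OrderTopology α] {u : ℕ → α} {a ε : α} (hu : Tendsto u atTop (𝓝 a)) (hε : a < ε) {N : ℕ}
    (hN : ∀ k ≤ N, ε ≤ u k) : ∃ m, N ≤ m ∧ u (m + 1) < ε ∧ ε ≤ u m := by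
  have hex : ∃ n, u n < ε := (hu.eventually (gt_mem_nhds hε)).exists
  have hNn : N < Nat.find hex := lt_of_not_ge fun h => (Nat.find_spec hex).not_ge (hN _ h)
  obtain ⟨m, hm⟩ : ∃ m, Nat.find hex = m + 1 := Nat.exists_eq_add_one.mpr (by omega)
  exact ⟨m, by omega, hm ▸ Nat.find_spec hex, not_lt.mp (Nat.find_min hex (by omega))⟩

theorem finite_setOf_abs_sub_lt_rpow_of_linearForms {ξ ρ : ℝ} (hρ : 0 ≤ ρ) {a b : ℕ → ℤ}
    (hne : ∀ n, (b n : ℝ) * ξ - a n ≠ 0)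
    (hlim : Tendsto (fun n => (b n : ℝ) * ξ - a n) atTop (𝓝 0))
    (hgrowth : ∀ᶠ n in atTop, |(b (n + 1) : ℝ)| / |b (n + 1) * ξ - a (n + 1)| ≤
      (1 / (2 * |b n * ξ - a n|)) ^ ρ) :
    {r : ℚ | |ξ - r| < 1 / (r.den : ℝ) ^ ρ}.Finite := by
  set δ : ℕ → ℝ := fun n => b n * ξ - a n
  obtain ⟨N, hN⟩ := eventually_atTop.mp hgrowth
  have hinv : Tendsto (fun q : ℕ => 1 / (2 * (q : ℝ))) atTop (𝓝 0) := by
    simpa only [one_div, Pi.inv_def] using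
      (tendsto_natCast_atTop_atTop.const_mul_atTop two_pos).inv_tendsto_atTop
  obtain ⟨Q, hQ⟩ := eventually_atTop.mp <|
    (eventually_all_finite (Set.finite_Iic N)).mpr fun k _ =>
      hinv.eventually (ge_mem_nhds (abs_pos.mpr (hne k)))
  refine (Rat.finite_setOf_den_le_abs_sub_lt_one ξ Q).subset fun r hr => ?_
  set q : ℝ := (r.den : ℝ)
  have hq : 1 ≤ q := Nat.one_le_cast.mpr r.pos
  have hqρ : 0 < q ^ ρ := Real.rpow_pos_of_pos (by positivity) ρ
  have hrq : q ^ ρ * |ξ - r| < 1 := by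
    have hr' : |ξ - r| < 1 / q ^ ρ := hr
    rw [lt_div_iff₀ hqρ] at hr'
    linarith
  refine ⟨?_, hr.trans_le ((div_le_one hqρ).mpr (Real.one_le_rpow hq hρ))⟩
  by_contra! hQr
  obtain ⟨m, hmN, hδn, hδm⟩ := Tendsto.exists_succ_lt_le (u := fun n => |δ n|)
    (by simpa using hlim.abs) (by positivity : (0 : ℝ) < 1 / (2 * q)) (hQ r.den hQr.le)
  have hpos : ∀ n, 0 < |δ n| := fun n => abs_pos.mpr (hne n)
  have hqm : 1 / (2 * |δ m|) ≤ q := by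
    rw [div_le_iff₀ (by linarith [hpos m])]
    rw [div_le_iff₀ (by positivity)] at hδm
    linarith
  have hratio : |(b (m + 1) : ℝ)| ≤ q ^ ρ * |δ (m + 1)| := by
    have := (hN m hmN).trans (Real.rpow_le_rpow (by positivity) hqm hρ)
    rwa [div_le_iff₀ (hpos _)] at this
  refine lt_irrefl _ (calc
    |δ (m + 1)| ≤ |(b (m + 1) : ℝ)| * |ξ - r| := abs_linearForm_le_mul_abs_sub_rat hδn
    _ ≤ q ^ ρ * |δ (m + 1)| * |ξ - r| := mul_le_mul_of_nonneg_right hratio (abs_nonneg _)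
    _ = |δ (m + 1)| * (q ^ ρ * |ξ - r|) := by ring
    _ < |δ (m + 1)| := mul_lt_of_lt_one_right (hpos _) hrq)

theorem irrational_of_linearForms {ξ : ℝ} {a b : ℕ → ℤ}
    (hne : ∀ n, (b n : ℝ) * ξ - a n ≠ 0)
    (hlim : Tendsto (fun n => (b n : ℝ) * ξ - a n) atTop (𝓝 0)) : Irrational ξ := by
  rintro ⟨r, rfl⟩
  have hδ : Tendsto (fun n => |(b n : ℝ) * r - a n|) atTop (𝓝 0) := by simpa using hlim.abs
  obtain ⟨n, hn⟩ :=
    (hδ.eventually (gt_mem_nhds (by positivity : (0 : ℝ) < 1 / (2 * r.den)))).exists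
  have := abs_linearForm_le_mul_abs_sub_rat hn
  rw [sub_self, abs_zero, mul_zero] at this
  exact hne n (abs_nonpos_iff.mp this)

theorem mu_eq_two_of_irrational_of_finite {ξ : ℝ} (hirr : Irrational ξ)
    (hfin : ∀ ρ : ℝ, 2 < ρ → {r : ℚ | |ξ - r| < 1 / (r.den : ℝ) ^ ρ}.Finite) : mu ξ = 2 := by
  refine le_antisymm (sSup_le ?_) (le_sSup ⟨2, ?_, rfl⟩)
  · rintro _ ⟨ρ, hρ, rfl⟩
    exact EReal.coe_le_coe_iff.mpr (not_lt.mp fun h => hρ (hfin ρ h))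
  · simpa only [muSet, Set.mem_ofPred_eq, Real.rpow_two] using
      Real.infinite_rat_abs_sub_lt_one_div_den_sq_of_irrational hirr

theorem eventually_mul_pow_le_factorial_rpow {C K ε : ℝ} (hC : 0 ≤ C) (hK : 0 ≤ K) (hε : 0 < ε) :
    ∀ᶠ n : ℕ in atTop, C * K ^ n ≤ (n ! : ℝ) ^ ε := by
  have hlim := (FloorSemiring.tendsto_pow_div_factorial_atTop (K ^ ε⁻¹)).const_mul (C ^ ε⁻¹)
  rw [mul_zero] at hlim
  filter_upwards [hlim.eventually (ge_mem_nhds zero_lt_one)] with n hn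
  rw [← Real.rpow_inv_le_iff_of_pos (by positivity) (by positivity) hε,
    Real.mul_rpow hC (pow_nonneg hK n), ← Real.rpow_pow_comm hK]
  rwa [← mul_div_assoc, div_le_one (by positivity)] at hn

theorem Nat.factorial_two_mul_add_one_le (n : ℕ) : (2 * n + 1)! ≤ 12 ^ n * n ! ^ 2 := by
  have hlin : 2 * n + 1 ≤ 3 ^ n := by
    induction n with
    | zero => rfl
    | succ n ih => rw [pow_succ]; omega
  have hchoose : (2 * n).choose n * n ! * n ! = (2 * n)! := by
    simpa [two_mul] using Nat.choose_mul_factorial_mul_factorial (Nat.le_add_left n n)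
  calc (2 * n + 1)! = (2 * n + 1) * ((2 * n).choose n * n ! * n !) := by
        rw [Nat.factorial_succ, hchoose]
    _ ≤ 3 ^ n * (4 ^ n * n ! * n !) := by
        gcongr
        exact Nat.centralBinom_le_four_pow n
    _ = 12 ^ n * n ! ^ 2 := by rw [show 12 = 3 * 4 by rfl, mul_pow]; ring

theorem eventually_factorial_succ_sq_le_rpow {ρ : ℝ} (hρ : 2 < ρ) :
    ∀ᶠ n : ℕ in atTop, 2 * 128 ^ (n + 1) * ((n + 1)! : ℝ) ^ 2 ≤ ((n ! : ℝ) / 6) ^ ρ := by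
  filter_upwards [eventually_mul_pow_le_factorial_rpow (C := 256 * 6 ^ ρ) (K := 512)
    (by positivity) (by norm_num) (sub_pos.mpr hρ)] with n hn
  have hfac : (0 : ℝ) < n ! := by positivity
  have hsucc : ((n : ℝ) + 1) ^ 2 ≤ 4 ^ n := by
    rw [show (4 : ℝ) ^ n = (2 ^ n) ^ 2 by rw [← pow_mul, mul_comm, pow_mul]; norm_num]
    exact pow_le_pow_left₀ (by positivity) (mod_cast Nat.lt_two_pow_self) 2
  have hsplit : ((n ! : ℝ) / 6) ^ ρ = (n ! : ℝ) ^ 2 * (n ! : ℝ) ^ (ρ - 2) / 6 ^ ρ := by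
    rw [Real.div_rpow hfac.le (by norm_num), ← Real.rpow_natCast, ← Real.rpow_add hfac]
    norm_num
  rw [hsplit, le_div_iff₀ (by positivity), Nat.factorial_succ]
  push_cast
  calc 2 * 128 ^ (n + 1) * (((n : ℝ) + 1) * n !) ^ 2 * 6 ^ ρ
      = (n ! : ℝ) ^ 2 * (256 * 6 ^ ρ * (128 ^ n * ((n : ℝ) + 1) ^ 2)) := by ring
    _ ≤ (n ! : ℝ) ^ 2 * (256 * 6 ^ ρ * 512 ^ n) := by
        gcongr
        calc (128 : ℝ) ^ n * ((n : ℝ) + 1) ^ 2 ≤ 128 ^ n * 4 ^ n :=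
              mul_le_mul_of_nonneg_left hsucc (by positivity)
          _ = 512 ^ n := by rw [← mul_pow]; norm_num
    _ ≤ (n ! : ℝ) ^ 2 * (n ! : ℝ) ^ (ρ - 2) := by gcongr

theorem Polynomial.factorial_dvd_eval_sumIDeriv {R : Type*} [CommRing R] {p : R[X]} {r : R}
    {q : ℕ} (h : (X - C r) ^ q ∣ p) : (q ! : R) ∣ p.sumIDeriv.eval r := by
  obtain ⟨g, -, hg⟩ := aeval_sumIDeriv R p q
  refine ⟨g.eval r, ?_⟩
  simpa [nsmul_eq_mul] using hg r (by simpa using h)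

theorem Polynomial.eval_zero_sumIDeriv_eq_sum {R : Type*} [CommSemiring R] {p : R[X]} {d : ℕ}
    (hd : p.natDegree ≤ d) :
    p.sumIDeriv.eval 0 = ∑ i ∈ Finset.range (d + 1), (i ! : R) * p.coeff i := by
  rw [sumIDeriv_apply_of_le hd, eval_finsetSum]
  refine Finset.sum_congr rfl fun i _ => ?_
  rw [← coeff_zero_eq_eval_zero, coeff_iterate_derivative, zero_add, Nat.descFactorial_self,
    nsmul_eq_mul]

theorem Polynomial.abs_eval_zero_sumIDeriv_le {p : ℤ[X]} {d : ℕ} {M : ℤ} (hd : p.natDegree ≤ d)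
    (hM : ∀ i, |p.coeff i| ≤ M) : |p.sumIDeriv.eval 0| ≤ (d + 1)! * M := by
  rw [eval_zero_sumIDeriv_eq_sum hd]
  calc |∑ i ∈ Finset.range (d + 1), (i ! : ℤ) * p.coeff i|
      ≤ ∑ i ∈ Finset.range (d + 1), |(i ! : ℤ) * p.coeff i| := Finset.abs_sum_le_sum_abs _ _
    _ ≤ ∑ _i ∈ Finset.range (d + 1), (d ! : ℤ) * M := Finset.sum_le_sum fun i hi => by
      rw [abs_mul, Nat.abs_cast]
      exact mul_le_mul (mod_cast Nat.factorial_le (Finset.mem_range_succ_iff.mp hi)) (hM i)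
        (abs_nonneg _) (by positivity)
    _ = (d + 1)! * M := by
      rw [Finset.sum_const, Finset.card_range, nsmul_eq_mul, Nat.factorial_succ]
      push_cast
      ring

theorem integral_exp_sub_mul_eval (p : ℝ[X]) (a b : ℝ) :
    ∫ x in a..b, Real.exp (b - x) * p.eval x =
      Real.exp (b - a) * p.sumIDeriv.eval a - p.sumIDeriv.eval b := by
  have hderiv : ∀ x, HasDerivAt (fun x => -(Real.exp (b - x) * p.sumIDeriv.eval x))
      (Real.exp (b - x) * p.eval x) x := by
    intro x
    have h : HasDerivAt (fun x => -(Real.exp (b - x) * p.sumIDeriv.eval x)) _ x :=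
      (((hasDerivAt_id' x).const_sub b).exp.mul (p.sumIDeriv.hasDerivAt x)).neg
    convert h using 1
    have hS := congrArg (eval x) (sumIDeriv_eq_self_add p)
    rw [eval_add] at hS
    linear_combination (-Real.exp (b - x)) * hS
  rw [intervalIntegral.integral_eq_sub_of_hasDerivAt (fun x _ => hderiv x)
    ((by fun_prop : Continuous fun x => Real.exp (b - x) * p.eval x).intervalIntegrable a b)]
  simp only [sub_self, Real.exp_zero, one_mul]
  ring

def hermitePoly (n : ℕ) : ℤ[X] := (X * (1 - X)) ^ n

theorem natDegree_hermitePoly_le (n : ℕ) : (hermitePoly n).natDegree ≤ 2 * n := by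
  unfold hermitePoly
  compute_degree
  omega

theorem abs_coeff_hermitePoly_le (n i : ℕ) : |(hermitePoly n).coeff i| ≤ 2 ^ n := by
  induction n generalizing i with
  | zero => rw [hermitePoly, pow_zero, coeff_one]; split_ifs <;> simp
  | succ n ih =>
    have hsucc : hermitePoly (n + 1) = hermitePoly n * X ^ 1 - hermitePoly n * X ^ 2 := by
      rw [hermitePoly, pow_succ, ← hermitePoly]; ring
    have hshift : ∀ k, |(hermitePoly n * X ^ k).coeff i| ≤ 2 ^ n := fun k => by
      rw [coeff_mul_X_pow']; split_ifs
      · exact ih _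
      · simp
    rw [hsucc, coeff_sub, pow_succ (2 : ℤ) n]
    linarith [abs_sub ((hermitePoly n * X ^ 1).coeff i) ((hermitePoly n * X ^ 2).coeff i),
      hshift 1, hshift 2]

theorem X_sub_C_pow_dvd_hermitePoly_zero (n : ℕ) : (X - C 0) ^ n ∣ hermitePoly n :=
  ⟨(1 - X) ^ n, by rw [hermitePoly, C_0, sub_zero, mul_pow]⟩

theorem X_sub_C_pow_dvd_hermitePoly_one (n : ℕ) : (X - C 1) ^ n ∣ hermitePoly n :=
  ⟨(-X) ^ n, by rw [hermitePoly, C_1, ← mul_pow]; ring⟩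

def hermiteIntegral (n : ℕ) : ℝ := ∫ x in (0 : ℝ)..1, Real.exp (1 - x) * (x * (1 - x)) ^ n

-- Both divisions are exact, by `Polynomial.factorial_dvd_eval_sumIDeriv`.
def expOneDen (n : ℕ) : ℤ := (hermitePoly n).sumIDeriv.eval 0 / n !

def expOneNum (n : ℕ) : ℤ := (hermitePoly n).sumIDeriv.eval 1 / n !

theorem factorial_mul_expOneDen (n : ℕ) :
    (n ! : ℤ) * expOneDen n = (hermitePoly n).sumIDeriv.eval 0 :=
  Int.mul_ediv_cancel' (factorial_dvd_eval_sumIDeriv (X_sub_C_pow_dvd_hermitePoly_zero n))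

theorem factorial_mul_expOneNum (n : ℕ) :
    (n ! : ℤ) * expOneNum n = (hermitePoly n).sumIDeriv.eval 1 :=
  Int.mul_ediv_cancel' (factorial_dvd_eval_sumIDeriv (X_sub_C_pow_dvd_hermitePoly_one n))

theorem hermiteIntegral_eq (n : ℕ) :
    hermiteIntegral n = Real.exp 1 * (hermitePoly n).sumIDeriv.eval 0 -
      (hermitePoly n).sumIDeriv.eval 1 := by
  have h := integral_exp_sub_mul_eval ((hermitePoly n).map (Int.castRingHom ℝ)) 0 1
  rw [sumIDeriv_map] at h
  simp only [hermiteIntegral, hermitePoly, Polynomial.map_pow, Polynomial.map_mul, map_X,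
    Polynomial.map_sub, Polynomial.map_one, eval_pow, eval_mul, eval_X, eval_sub, eval_one,
    sub_zero, eval_zero_map, eval_one_map, eq_intCast] at h ⊢
  exact h

theorem expOneDen_mul_exp_one_sub_expOneNum (n : ℕ) :
    (expOneDen n : ℝ) * Real.exp 1 - expOneNum n = hermiteIntegral n / n ! := by
  rw [eq_div_iff (by positivity), hermiteIntegral_eq, ← factorial_mul_expOneDen,
    ← factorial_mul_expOneNum]
  push_cast
  ring

theorem continuous_hermiteIntegrand (n : ℕ) :
    Continuous fun x : ℝ => Real.exp (1 - x) * (x * (1 - x)) ^ n := by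
  fun_prop

theorem hermiteIntegral_le (n : ℕ) : hermiteIntegral n ≤ 3 * (1 / 4) ^ n := by
  have hbound : ∀ x ∈ Set.Icc (0 : ℝ) 1,
      Real.exp (1 - x) * (x * (1 - x)) ^ n ≤ 3 * (1 / 4) ^ n := by
    rintro x ⟨hx0, hx1⟩
    have hexp : Real.exp (1 - x) ≤ 3 :=
      (Real.exp_le_exp.mpr (by linarith)).trans Real.exp_one_lt_three.le
    have hpow : (x * (1 - x)) ^ n ≤ (1 / 4) ^ n :=
      pow_le_pow_left₀ (by nlinarith) (by nlinarith [sq_nonneg (x - 1 / 2)]) n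
    exact mul_le_mul hexp hpow (by positivity) (by norm_num)
  calc hermiteIntegral n ≤ ∫ _ in (0 : ℝ)..1, (3 * (1 / 4) ^ n : ℝ) :=
        intervalIntegral.integral_mono_on zero_le_one
          ((continuous_hermiteIntegrand n).intervalIntegrable 0 1) intervalIntegrable_const hbound
    _ = 3 * (1 / 4) ^ n := by simp

theorem hermiteIntegral_ge (n : ℕ) : (3 / 16) ^ n / 2 ≤ hermiteIntegral n := by
  have hbound : ∀ x ∈ Set.Icc (1 / 4 : ℝ) (3 / 4),
      (3 / 16 : ℝ) ^ n ≤ Real.exp (1 - x) * (x * (1 - x)) ^ n := by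
    rintro x ⟨hx0, hx1⟩
    have hpow : (3 / 16 : ℝ) ^ n ≤ (x * (1 - x)) ^ n :=
      pow_le_pow_left₀ (by norm_num) (by nlinarith) n
    calc (3 / 16 : ℝ) ^ n = 1 * (3 / 16) ^ n := (one_mul _).symm
      _ ≤ Real.exp (1 - x) * (x * (1 - x)) ^ n :=
          mul_le_mul (Real.one_le_exp (by linarith)) hpow (by positivity) (by positivity)
  have hnonneg : ∀ᵐ x ∂(MeasureTheory.volume.restrict (Set.Ioc (0 : ℝ) 1)),
      0 ≤ Real.exp (1 - x) * (x * (1 - x)) ^ n := by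
    filter_upwards [MeasureTheory.ae_restrict_mem measurableSet_Ioc] with x ⟨hx0, hx1⟩
    have : 0 ≤ x * (1 - x) := by nlinarith
    positivity
  calc (3 / 16 : ℝ) ^ n / 2
      = ∫ _ in (1 / 4 : ℝ)..(3 / 4), (3 / 16 : ℝ) ^ n := by
        rw [intervalIntegral.integral_const, smul_eq_mul]; ring
    _ ≤ ∫ x in (1 / 4 : ℝ)..(3 / 4), Real.exp (1 - x) * (x * (1 - x)) ^ n :=
        intervalIntegral.integral_mono_on (by norm_num) intervalIntegrable_const
          ((continuous_hermiteIntegrand n).intervalIntegrable _ _) hbound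
    _ ≤ hermiteIntegral n :=
        intervalIntegral.integral_mono_interval (by norm_num) (by norm_num) (by norm_num) hnonneg
          ((continuous_hermiteIntegrand n).intervalIntegrable _ _)

theorem abs_expOneDen_le (n : ℕ) : |(expOneDen n : ℝ)| ≤ 24 ^ n * n ! := by
  have h : (n ! : ℤ) * |expOneDen n| ≤ n ! * (24 ^ n * n !) := by
    calc (n ! : ℤ) * |expOneDen n| = |(hermitePoly n).sumIDeriv.eval 0| := by
          rw [← factorial_mul_expOneDen, abs_mul, Nat.abs_cast]
      _ ≤ (2 * n + 1)! * 2 ^ n :=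
          abs_eval_zero_sumIDeriv_le (natDegree_hermitePoly_le n) (abs_coeff_hermitePoly_le n)
      _ ≤ (12 ^ n * n ! ^ 2 : ℕ) * 2 ^ n := by
          gcongr
          exact_mod_cast Nat.factorial_two_mul_add_one_le n
      _ = n ! * (24 ^ n * n !) := by
          rw [show (24 : ℤ) = 12 * 2 by rfl, mul_pow]; push_cast; ring
  exact_mod_cast le_of_mul_le_mul_left h (by positivity)

theorem hermiteIntegral_pos (n : ℕ) : 0 < hermiteIntegral n :=
  lt_of_lt_of_le (by positivity) (hermiteIntegral_ge n)

theorem expOneDen_mul_exp_one_sub_expOneNum_ne_zero (n : ℕ) :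
    (expOneDen n : ℝ) * Real.exp 1 - expOneNum n ≠ 0 := by
  rw [expOneDen_mul_exp_one_sub_expOneNum]
  exact (div_pos (hermiteIntegral_pos n) (by positivity)).ne'

theorem tendsto_expOneDen_mul_exp_one_sub_expOneNum :
    Tendsto (fun n => (expOneDen n : ℝ) * Real.exp 1 - expOneNum n) atTop (𝓝 0) := by
  simp_rw [expOneDen_mul_exp_one_sub_expOneNum]
  have hgeom := (tendsto_pow_atTop_nhds_zero_of_lt_one (by norm_num : (0 : ℝ) ≤ 1 / 4)
    (by norm_num)).const_mul 3
  rw [mul_zero] at hgeom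
  refine squeeze_zero (fun n => (div_pos (hermiteIntegral_pos n) (by positivity)).le)
    (fun n => ?_) hgeom
  exact (div_le_self (hermiteIntegral_pos n).le (mod_cast Nat.factorial_pos n)).trans
    (hermiteIntegral_le n)

theorem eventually_abs_expOneDen_div_le {ρ : ℝ} (hρ : 2 < ρ) :
    ∀ᶠ n in atTop,
      |(expOneDen (n + 1) : ℝ)| / |expOneDen (n + 1) * Real.exp 1 - expOneNum (n + 1)| ≤
        (1 / (2 * |expOneDen n * Real.exp 1 - expOneNum n|)) ^ ρ := by
  filter_upwards [eventually_factorial_succ_sq_le_rpow hρ] with n hn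
  simp only [expOneDen_mul_exp_one_sub_expOneNum]
  have hJ := hermiteIntegral_pos
  rw [abs_of_pos (div_pos (hJ _) (by positivity)), abs_of_pos (div_pos (hJ _) (by positivity))]
  have hsmall : 2 * hermiteIntegral n ≤ 6 := by
    linarith [hermiteIntegral_le n, pow_le_one₀ (M₀ := ℝ) (a := 1 / 4) (by norm_num) (by norm_num)
      (n := n)]
  calc |(expOneDen (n + 1) : ℝ)| / (hermiteIntegral (n + 1) / (n + 1)!)
      ≤ 24 ^ (n + 1) * (n + 1)! / ((3 / 16) ^ (n + 1) / 2 / (n + 1)!) := by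
        gcongr
        · exact abs_expOneDen_le _
        · exact hermiteIntegral_ge _
    _ = 2 * 128 ^ (n + 1) * ((n + 1)! : ℝ) ^ 2 := by
        field_simp
        rw [← mul_pow]
        norm_num
    _ ≤ ((n ! : ℝ) / 6) ^ ρ := hn
    _ ≤ (1 / (2 * (hermiteIntegral n / n !))) ^ ρ := by
        refine Real.rpow_le_rpow (by positivity) ?_ (by linarith)
        rw [show 1 / (2 * (hermiteIntegral n / n !)) = n ! / (2 * hermiteIntegral n) by
          field_simp]
        exact div_le_div_of_nonneg_left (by positivity) (by linarith [hJ n]) hsmall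

theorem irrational_exp_one : Irrational (Real.exp 1) :=
  irrational_of_linearForms expOneDen_mul_exp_one_sub_expOneNum_ne_zero
    tendsto_expOneDen_mul_exp_one_sub_expOneNum

theorem finite_setOf_abs_exp_one_sub_lt_rpow {ρ : ℝ} (hρ : 2 < ρ) :
    {r : ℚ | |Real.exp 1 - r| < 1 / (r.den : ℝ) ^ ρ}.Finite :=
  finite_setOf_abs_sub_lt_rpow_of_linearForms (by linarith)
    expOneDen_mul_exp_one_sub_expOneNum_ne_zero tendsto_expOneDen_mul_exp_one_sub_expOneNum
    (eventually_abs_expOneDen_div_le hρ)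

/-- The irrationality exponent of `e` equals `2`. -/
theorem mu_e_eq_two : mu (Real.exp 1) = 2 :=
  mu_eq_two_of_irrational_of_finite irrational_exp_one fun _ =>
    finite_setOf_abs_exp_one_sub_lt_rpow

end
end
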